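/- arXiv:1807.11897 — 9 statements merged into one kernel-verified Lean document; each statement's English description precedes it below -/
import Mathlib

section
/- Let n, m ≥ 1 and N = n + m. Let Q₁ be a symmetric n×n real matrix with Q₁uₙ = 0 and Q₂ a symmetric m×m real matrix with Q₂uₘ = 0. Let B̃ be an n×m real matrix all of whose row sums equal a common constant r and all of whose column sums equal a common constant c (regularity condition). Set Δ₁ = diag(B̃uₘ), Δ₂ = diag(B̃ᵀuₙ), μ = (1/n + 1/m)·(uₙᵀ B̃ uₘ), and let Q be the N×N block matrix [[Q₁ + Δ₁, −B̃], [−B̃ᵀ, Q₂ + Δ₂]]. Then the vector x = (√(m/n)·uₙ, −√(n/m)·uₘ) satisfies Q x = μ x; that is, x is an eigenvector of Q with eigenvalue μ, and uₙᵀ B̃ uₘ is the total interconnection strength. -/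
open Matrix

/-- If the interconnection matrix `B` has constant row sums `r` and constant
column sums `c`, then `x = (√(m/n)·uₙ, −√(n/m)·uₘ)` is an eigenvector of the supra-Laplacian
`Q = [[Q₁ + Δ₁, −B], [−Bᵀ, Q₂ + Δ₂]]` with eigenvalue `μ = (1/n + 1/m)·(uₙᵀ B uₘ)`, and
`uₙᵀ B uₘ` is the total interconnection strength. -/
theorem stmt_0
    (n m : ℕ) (hn : 1 ≤ n) (hm : 1 ≤ m)
    (Q₁ : Matrix (Fin n) (Fin n) ℝ) (Q₂ : Matrix (Fin m) (Fin m) ℝ)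
    (hQ₁ : Q₁.IsHermitian) (hQ₂ : Q₂.IsHermitian)
    (hQ₁u : Q₁ *ᵥ (fun _ => (1:ℝ)) = 0) (hQ₂u : Q₂ *ᵥ (fun _ => (1:ℝ)) = 0)
    (B : Matrix (Fin n) (Fin m) ℝ) (r c : ℝ)
    (hrow : ∀ i, ∑ j, B i j = r) (hcol : ∀ j, ∑ i, B i j = c)
    (Q : Matrix (Fin n ⊕ Fin m) (Fin n ⊕ Fin m) ℝ)
    (hQdef : Q = Matrix.fromBlocks
      (Q₁ + Matrix.diagonal (B *ᵥ (fun _ => (1:ℝ)))) (-B)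
      (-Bᵀ) (Q₂ + Matrix.diagonal (Bᵀ *ᵥ (fun _ => (1:ℝ)))))
    (μ : ℝ)
    (hμ : μ = (1 / (n:ℝ) + 1 / (m:ℝ)) * ((fun _ => (1:ℝ)) ⬝ᵥ (B *ᵥ (fun _ => (1:ℝ)))))
    (x : Fin n ⊕ Fin m → ℝ)
    (hx : x = Sum.elim (fun _ => Real.sqrt ((m:ℝ) / (n:ℝ)))
      (fun _ => -Real.sqrt ((n:ℝ) / (m:ℝ)))) :
    Q *ᵥ x = μ • x ∧
      (fun _ => (1:ℝ)) ⬝ᵥ (B *ᵥ (fun _ => (1:ℝ))) = ∑ i, ∑ j, B i j := by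
  have hn0 : (0:ℝ) < n := by exact_mod_cast hn
  have hm0 : (0:ℝ) < m := by exact_mod_cast m.pos_of_ne_zero (by omega)
  -- total strength
  have htot : (fun _ => (1:ℝ)) ⬝ᵥ (B *ᵥ (fun _ => (1:ℝ))) = ∑ i, ∑ j, B i j := by
    simp [dotProduct, mulVec]
  have htotr : (∑ i, ∑ j, B i j) = n * r := by
    simp [hrow, Finset.sum_const, mul_comm]
  have htotc : (∑ i, ∑ j, B i j) = m * c := by
    rw [show (∑ i, ∑ j, B i j) = ∑ j, ∑ i, B i j from Finset.sum_comm]; simp [hcol, Finset.sum_const, mul_comm]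
  set sa := Real.sqrt ((m:ℝ)/(n:ℝ)) with hsa
  set sb := Real.sqrt ((n:ℝ)/(m:ℝ)) with hsb
  have hprod : sa * sb = 1 := by
    rw [hsa, hsb, ← Real.sqrt_mul (by positivity)]
    rw [show (m:ℝ)/n * ((n:ℝ)/m) = 1 by field_simp]
    exact Real.sqrt_one
  have hsa2 : sa * sa = (m:ℝ)/n := Real.mul_self_sqrt (by positivity)
  have hsb2 : sb * sb = (n:ℝ)/m := Real.mul_self_sqrt (by positivity)
  have hsbeq : sb = (n:ℝ)/m * sa := by
    have h : sb * (sa * sb) = (n:ℝ)/m * sa := by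
      rw [show sb * (sa * sb) = (sb * sb) * sa by ring, hsb2]
    rwa [hprod, mul_one] at h
  have hsaeq : sa = (m:ℝ)/n * sb := by
    have h : sa * (sa * sb) = (m:ℝ)/n * sb := by
      rw [show sa * (sa * sb) = (sa * sa) * sb by ring, hsa2]
    rwa [hprod, mul_one] at h
  have hμ' : μ = ((n:ℝ) + m) / (n * m) * (n * r) := by
    rw [hμ, htot, htotr, div_add_div _ _ hn0.ne' hm0.ne', one_mul, mul_one, add_comm (m:ℝ)]
  refine ⟨?_, htot⟩
  subst hQdef hx
  have hQ1row : ∀ i, ∑ j, Q₁ i j = 0 := by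
    intro i
    have := congrFun hQ₁u i
    simpa [mulVec, dotProduct] using this
  have hQ2row : ∀ i, ∑ j, Q₂ i j = 0 := by
    intro i
    have := congrFun hQ₂u i
    simpa [mulVec, dotProduct] using this
  funext k
  cases k with
  | inl i =>
    have hrc : (n:ℝ) * r = m * c := by rw [← htotr, htotc]
    simp only [mulVec, dotProduct, Fintype.sum_sum_type, fromBlocks_apply₁₁,
      fromBlocks_apply₁₂, Sum.elim_inl, Sum.elim_inr, Pi.smul_apply, smul_eq_mul,
      Matrix.add_apply, Matrix.neg_apply]
    have h1 : ∑ j, (Q₁ i j + Matrix.diagonal (B *ᵥ (fun _ => (1:ℝ))) i j) * sa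
        = r * sa := by
      rw [← Finset.sum_mul, Finset.sum_add_distrib, hQ1row i,
        Finset.sum_eq_single i (fun b _ hb => Matrix.diagonal_apply_ne' _ hb) (by simp)]
      simp [mulVec, dotProduct, hrow i]
    have h2 : ∑ j, -B i j * -sb = r * sb := by
      calc ∑ j, -B i j * -sb = ∑ j, B i j * sb := Finset.sum_congr rfl fun j _ => by ring
        _ = r * sb := by rw [← Finset.sum_mul, hrow i]
    rw [h1, h2, hμ', hsbeq]
    field_simp
    ring
  | inr j =>
    have hrc : (m:ℝ) * c = n * r := by rw [← htotc, htotr]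
    simp only [mulVec, dotProduct, Fintype.sum_sum_type, fromBlocks_apply₂₁,
      fromBlocks_apply₂₂, Sum.elim_inl, Sum.elim_inr, Pi.smul_apply, smul_eq_mul,
      Matrix.add_apply, Matrix.neg_apply, Matrix.transpose_apply]
    have h1 : ∑ i, -B i j * sa = -(c * sa) := by
      calc ∑ i, -B i j * sa = -∑ i, B i j * sa := by simp [neg_mul]
        _ = -(c * sa) := by rw [← Finset.sum_mul, hcol j]
    have h2 : ∑ i, (Q₂ j i + Matrix.diagonal (Bᵀ *ᵥ (fun _ => (1:ℝ))) j i) * -sb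
        = -(c * sb) := by
      rw [← Finset.sum_mul, Finset.sum_add_distrib, hQ2row j,
        Finset.sum_eq_single j (fun b _ hb => Matrix.diagonal_apply_ne' _ hb) (by simp)]
      simp only [Matrix.diagonal_apply_eq, mulVec, dotProduct, Matrix.transpose_apply,
        mul_one, zero_add, hcol j]
      ring
    rw [h1, h2, hμ', hsaeq]
    have hcr : c = (n:ℝ) * r / m := by field_simp; linarith [hrc]
    rw [hcr]
    field_simp
    ring
end

section
/- Let n, m ≥ 1 and N = n + m. Let Q₁ be a symmetric n×n real matrix with Q₁uₙ = 0 and Q₂ a symmetric m×m real matrix with Q₂uₘ = 0. Let B̃ be an n×m real matrix, Δ₁ = diag(B̃uₘ), Δ₂ = diag(B̃ᵀuₙ), and let Q be the N×N block matrix [[Q₁ + Δ₁, −B̃], [−B̃ᵀ, Q₂ + Δ₂]]. If the vector x = (√(m/n)·uₙ, −√(n/m)·uₘ) satisfies Q x = μ x for some real μ, then B̃ has constant row sums and constant column sums, namely B̃uₘ = (μ m / N)·uₙ and B̃ᵀuₙ = (μ n / N)·uₘ. -/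
open Matrix in
lemma key (n m : ℝ) (hn : 0 < n) (hm : 0 < m) (v μ : ℝ)
    (h : v * Real.sqrt (m/n) + v * Real.sqrt (n/m) = μ * Real.sqrt (m/n)) :
    v = μ * m / (n + m) := by
  have hsn : 0 < Real.sqrt n := Real.sqrt_pos.2 hn
  have hsm : 0 < Real.sqrt m := Real.sqrt_pos.2 hm
  have h1 : Real.sqrt (m/n) = Real.sqrt m / Real.sqrt n := by rw [Real.sqrt_div hm.le]
  have h2 : Real.sqrt (n/m) = Real.sqrt n / Real.sqrt m := by rw [Real.sqrt_div hn.le]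
  have h3 : Real.sqrt n ^ 2 = n := Real.sq_sqrt hn.le
  have h4 : Real.sqrt m ^ 2 = m := Real.sq_sqrt hm.le
  rw [h1, h2] at h
  field_simp at h ⊢
  have h5 : (v*(n+m) - μ*m) * Real.sqrt n = 0 := by
    linear_combination Real.sqrt n * h - v*Real.sqrt n*h3 + (μ - v)*Real.sqrt n*h4
  have h6 := (mul_eq_zero.1 h5).resolve_right hsn.ne'
  linarith



open Matrix

/-- Converse regularity: if `x = (√(m/n)·uₙ, −√(n/m)·uₘ)` is an eigenvector of
the supra-Laplacian `Q = [[Q₁ + Δ₁, −B], [−Bᵀ, Q₂ + Δ₂]]` with eigenvalue `μ`, then `B` has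
constant row sums `μ·m/N` and constant column sums `μ·n/N`, where `N = n + m`. -/
theorem stmt_1
    (n m : ℕ) (hn : 1 ≤ n) (hm : 1 ≤ m)
    (Q₁ : Matrix (Fin n) (Fin n) ℝ) (Q₂ : Matrix (Fin m) (Fin m) ℝ)
    (hQ₁ : Q₁.IsHermitian) (hQ₂ : Q₂.IsHermitian)
    (hQ₁u : Q₁ *ᵥ (fun _ => (1:ℝ)) = 0) (hQ₂u : Q₂ *ᵥ (fun _ => (1:ℝ)) = 0)
    (B : Matrix (Fin n) (Fin m) ℝ)
    (Q : Matrix (Fin n ⊕ Fin m) (Fin n ⊕ Fin m) ℝ)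
    (hQdef : Q = Matrix.fromBlocks
      (Q₁ + Matrix.diagonal (B *ᵥ (fun _ => (1:ℝ)))) (-B)
      (-Bᵀ) (Q₂ + Matrix.diagonal (Bᵀ *ᵥ (fun _ => (1:ℝ)))))
    (x : Fin n ⊕ Fin m → ℝ)
    (hx : x = Sum.elim (fun _ => Real.sqrt ((m:ℝ) / (n:ℝ)))
      (fun _ => -Real.sqrt ((n:ℝ) / (m:ℝ))))
    (μ : ℝ) (heig : Q *ᵥ x = μ • x) :
    B *ᵥ (fun _ => (1:ℝ)) = (fun _ => μ * (m:ℝ) / ((n:ℝ) + (m:ℝ))) ∧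
      Bᵀ *ᵥ (fun _ => (1:ℝ)) = (fun _ => μ * (n:ℝ) / ((n:ℝ) + (m:ℝ))) := by
  have hn' : (0:ℝ) < n := by exact_mod_cast hn
  have hm' : (0:ℝ) < m := by exact_mod_cast hm
  subst hQdef hx
  rw [fromBlocks_mulVec] at heig
  constructor
  · funext i
    have h := congrFun heig (Sum.inl i)
    have hq : ∑ j, Q₁ i j = 0 := by
      have := congrFun hQ₁u i
      simpa [mulVec, dotProduct] using this
    simp only [Pi.add_apply, Sum.elim_inl, Sum.elim_inr, Function.comp_def, mulVec,
      dotProduct, Matrix.add_apply, diagonal_apply, Matrix.neg_apply, Pi.smul_apply, smul_eq_mul,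
      Finset.sum_add_distrib, add_mul, mul_neg, neg_mul, neg_neg, mul_one,
      Finset.sum_ite_eq, Finset.mem_univ, if_true, ← Finset.sum_mul, hq, zero_mul,
      zero_add] at h
    simp only [mulVec, dotProduct, mul_one]
    exact key (n:ℝ) (m:ℝ) hn' hm' _ μ (by linarith [h])
  · funext j
    have h := congrFun heig (Sum.inr j)
    have hq : ∑ k, Q₂ j k = 0 := by
      have := congrFun hQ₂u j
      simpa [mulVec, dotProduct] using this
    simp only [Pi.add_apply, Sum.elim_inl, Sum.elim_inr, Function.comp_def, mulVec,
      dotProduct, Matrix.add_apply, diagonal_apply, Matrix.neg_apply, Pi.smul_apply, smul_eq_mul,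
      Finset.sum_add_distrib, add_mul, mul_neg, neg_mul, neg_neg, mul_one,
      Finset.sum_ite_eq, Finset.mem_univ, if_true, ← Finset.sum_mul, hq, zero_mul,
      zero_add, transpose_apply, neg_add, Finset.sum_neg_distrib, ite_mul] at h
    simp only [mulVec, dotProduct, mul_one, transpose_apply]
    have := key (m:ℝ) (n:ℝ) hm' hn' (∑ i, B i j) μ (by linarith [h])
    rw [this]; ring
end

section
/- In the k-to-k setup with n ≥ 2, the second-smallest eigenvalue of the supra-Laplacian satisfies λ₂(Q) ≤ min(λ₂(Q₁), λ₂(Q₂)) + kp. -/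
open Matrix

/-- The eigenvalues of a Hermitian matrix, sorted in increasing order (as a list). -/
noncomputable def sortedEigs {ι : Type*} [Fintype ι] [DecidableEq ι]
    {A : Matrix ι ι ℝ} (hA : A.IsHermitian) : List ℝ :=
  Multiset.sort (Finset.univ.val.map hA.eigenvalues) (· ≤ ·)

section Helpers

variable {ι : Type*} [Fintype ι] [DecidableEq ι] {A : Matrix ι ι ℝ}

lemma SE.sorted_second_le {l : List ℝ} (hl : l.Pairwise (· ≤ ·)) {c : ℝ}
    (h : 2 ≤ l.countP (fun a => decide (a ≤ c))) : l[1]! ≤ c := by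
  match l with
  | [] => simp at h
  | [a] => simp only [List.countP_cons, List.countP_nil] at h; split at h <;> omega
  | a :: b :: t =>
    by_contra hbc
    push_neg at hbc
    have hb : ¬ (b ≤ c) := by
      intro hh
      have h1 : (a :: b :: t)[1]! = b := by simp
      rw [h1] at hbc
      exact absurd hh (not_le.2 hbc)
    have ht : t.countP (fun a => decide (a ≤ c)) = 0 := by
      rw [List.countP_eq_zero]
      intro e he
      have : b ≤ e := (List.pairwise_cons.1 (List.pairwise_cons.1 hl).2).1 e he
      simp only [decide_eq_true_eq]
      intro hec
      exact hb (le_trans this hec)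
    simp only [List.countP_cons, ht, hb, decide_eq_true_eq, if_false,
      Nat.zero_add, zero_add] at h
    split at h <;> omega

lemma SE.countP_sortedEigs (hA : A.IsHermitian) (c : ℝ) :
    (sortedEigs hA).countP (fun a => decide (a ≤ c)) =
      (Finset.univ.filter (fun i => hA.eigenvalues i ≤ c)).card := by
  have h1 : Multiset.countP (· ≤ c) ((sortedEigs hA : List ℝ) : Multiset ℝ) =
      (sortedEigs hA).countP (fun a => decide (a ≤ c)) := Multiset.coe_countP _ _
  rw [← h1, sortedEigs, Multiset.sort_eq, Multiset.countP_map]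
  rfl

lemma SE.length_sortedEigs (hA : A.IsHermitian) :
    (sortedEigs hA).length = Fintype.card ι := by
  simp [sortedEigs]

lemma SE.two_le_countP {l : List ℝ} (hl : l.Pairwise (· ≤ ·)) (hlen : 2 ≤ l.length) :
    2 ≤ l.countP (fun a => decide (a ≤ l[1]!)) := by
  match l with
  | [] => simp at hlen
  | [a] => simp at hlen
  | a :: b :: t =>
    have hab : a ≤ b := (List.pairwise_cons.1 hl).1 b (by simp)
    have h1 : (a :: b :: t)[1]! = b := by simp
    rw [h1]
    simp [List.countP_cons, hab]

lemma SE.exists_two_indices (hA : A.IsHermitian) (hcard : 2 ≤ Fintype.card ι) :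
    ∃ i j : ι, i ≠ j ∧ hA.eigenvalues i ≤ (sortedEigs hA)[1]!
      ∧ hA.eigenvalues j ≤ (sortedEigs hA)[1]! := by
  have hlen : 2 ≤ (sortedEigs hA).length := by rw [SE.length_sortedEigs]; exact hcard
  have h2 : 2 ≤ (sortedEigs hA).countP (fun a => decide (a ≤ (sortedEigs hA)[1]!)) :=
    SE.two_le_countP (Multiset.pairwise_sort (α := ℝ) _ (· ≤ ·)) hlen
  rw [SE.countP_sortedEigs] at h2
  obtain ⟨i, hi, j, hj, hij⟩ := Finset.one_lt_card.1 h2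
  simp only [Finset.mem_filter] at hi hj
  exact ⟨i, j, hij, hi.2, hj.2⟩

lemma SE.sortedEigs_second_le_of_two_indices (hA : A.IsHermitian) {c : ℝ}
    (h : ∃ i j : ι, i ≠ j ∧ hA.eigenvalues i ≤ c ∧ hA.eigenvalues j ≤ c) :
    (sortedEigs hA)[1]! ≤ c := by
  obtain ⟨i, j, hij, hi, hj⟩ := h
  have hcount : 2 ≤ (sortedEigs hA).countP (fun a => decide (a ≤ c)) := by
    rw [SE.countP_sortedEigs]
    refine Finset.one_lt_card.2 ⟨i, ?_, j, ?_, hij⟩ <;> simp [hi, hj]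
  exact SE.sorted_second_le (Multiset.pairwise_sort _ _) hcount

lemma SE.toEuclideanLin_eigenvectorBasis (hA : A.IsHermitian) (j : ι) :
    Matrix.toEuclideanLin A (hA.eigenvectorBasis j) =
      hA.eigenvalues j • hA.eigenvectorBasis j := by
  apply (WithLp.equiv 2 (ι → ℝ)).injective
  simp only [WithLp.equiv_apply, Matrix.ofLp_toEuclideanLin_apply, WithLp.ofLp_smul]
  exact hA.mulVec_eigenvectorBasis j

lemma SE.repr_toEuclideanLin (hA : A.IsHermitian) (v : EuclideanSpace ℝ ι) (i : ι) :
    (hA.eigenvectorBasis).repr (Matrix.toEuclideanLin A v) i =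
      hA.eigenvalues i * (hA.eigenvectorBasis).repr v i := by
  have hsym := (Matrix.isHermitian_iff_isSymmetric.1 hA)
  rw [OrthonormalBasis.repr_apply_apply, OrthonormalBasis.repr_apply_apply,
    ← hsym (hA.eigenvectorBasis i) v, SE.toEuclideanLin_eigenvectorBasis hA i,
    real_inner_smul_left]

lemma SE.inner_eq_sum_repr (hA : A.IsHermitian) (v w : EuclideanSpace ℝ ι) :
    (inner ℝ v w : ℝ) = ∑ i, (hA.eigenvectorBasis).repr v i * (hA.eigenvectorBasis).repr w i := by
  have h : (inner ℝ ((hA.eigenvectorBasis).repr v) ((hA.eigenvectorBasis).repr w) : ℝ) = inner ℝ v w :=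
    (hA.eigenvectorBasis).repr.inner_map_map v w
  rw [← h, PiLp.inner_apply]
  norm_num
  exact Finset.sum_congr rfl fun i _ => mul_comm _ _

lemma SE.inner_toEuclideanLin_eq_sum (hA : A.IsHermitian) (v : EuclideanSpace ℝ ι) :
    (inner ℝ v (Matrix.toEuclideanLin A v) : ℝ) =
      ∑ i, hA.eigenvalues i * ((hA.eigenvectorBasis).repr v i)^2 := by
  rw [SE.inner_eq_sum_repr hA]
  refine Finset.sum_congr rfl fun i _ => ?_
  rw [SE.repr_toEuclideanLin hA]
  ring

/-- Main abstract lemma: a 2-dimensional test space bounds the second eigenvalue. -/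
lemma SE.second_eig_le (hA : A.IsHermitian) {c : ℝ} {x y : ι → ℝ}
    (hx : x ≠ 0) (hy : y ≠ 0) (hxy : x ⬝ᵥ y = 0)
    (h1 : x ⬝ᵥ (A *ᵥ x) ≤ c * (x ⬝ᵥ x)) (h2 : y ⬝ᵥ (A *ᵥ y) ≤ c * (y ⬝ᵥ y))
    (hcross : x ⬝ᵥ (A *ᵥ y) = 0) :
    (sortedEigs hA)[1]! ≤ c := by
  classical
  set T := Matrix.toEuclideanLin A with hT
  set b := hA.eigenvectorBasis with hb
  set μ := hA.eigenvalues with hμ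
  set vx : EuclideanSpace ℝ ι := (WithLp.equiv 2 (ι → ℝ)).symm x with hvx
  set vy : EuclideanSpace ℝ ι := (WithLp.equiv 2 (ι → ℝ)).symm y with hvy
  have hinner : ∀ v w : ι → ℝ,
      (inner ℝ ((WithLp.equiv 2 (ι → ℝ)).symm v) ((WithLp.equiv 2 (ι → ℝ)).symm w) : ℝ) = v ⬝ᵥ w := by
    intro v w
    rw [PiLp.inner_apply]
    norm_num [dotProduct]
    exact Finset.sum_congr rfl fun i _ => mul_comm _ _
  have hTx : ∀ v : ι → ℝ, T ((WithLp.equiv 2 (ι → ℝ)).symm v) =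
      (WithLp.equiv 2 (ι → ℝ)).symm (A *ᵥ v) := fun v =>
    Matrix.toEuclideanLin_apply_piLp_toLp A v
  have hvx0 : vx ≠ 0 := fun h => hx ((WithLp.equiv 2 (ι → ℝ)).symm.injective (by simpa [hvx] using h))
  have hvy0 : vy ≠ 0 := fun h => hy ((WithLp.equiv 2 (ι → ℝ)).symm.injective (by simpa [hvy] using h))
  have hsym := (Matrix.isHermitian_iff_isSymmetric.1 hA)
  have hi1 : (inner ℝ vx (T vx) : ℝ) ≤ c * inner ℝ vx vx := by
    rw [hvx, hTx, hinner, hinner]; exact h1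
  have hi2 : (inner ℝ vy (T vy) : ℝ) ≤ c * inner ℝ vy vy := by
    rw [hvy, hTx, hinner, hinner]; exact h2
  have hic : (inner ℝ vx (T vy) : ℝ) = 0 := by rw [hvx, hvy, hTx, hinner]; exact hcross
  have hic' : (inner ℝ vy (T vx) : ℝ) = 0 := by
    rw [← hsym vy vx, real_inner_comm]; exact hic
  have hio : (inner ℝ vx vy : ℝ) = 0 := by rw [hvx, hvy, hinner]; exact hxy
  have hray : ∀ a d : ℝ, (inner ℝ (a • vx + d • vy) (T (a • vx + d • vy)) : ℝ)
      ≤ c * inner ℝ (a • vx + d • vy) (a • vx + d • vy) := by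
    intro a d
    have e1 : (inner ℝ (a • vx + d • vy) (T (a • vx + d • vy)) : ℝ)
        = a^2 * inner ℝ vx (T vx) + d^2 * inner ℝ vy (T vy)
          + a*d*(inner ℝ vx (T vy)) + a*d*(inner ℝ vy (T vx)) := by
      simp only [map_add, LinearMap.map_smul, inner_add_left, inner_add_right,
        real_inner_smul_left, real_inner_smul_right]
      ring
    have e2 : (inner ℝ (a • vx + d • vy) (a • vx + d • vy) : ℝ)
        = a^2 * inner ℝ vx vx + d^2 * inner ℝ vy vy := by
      have hio' : (inner ℝ vy vx : ℝ) = 0 := by rw [real_inner_comm]; exact hio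
      simp only [inner_add_left, inner_add_right, real_inner_smul_left, real_inner_smul_right,
        hio, hio']
      ring
    rw [e1, e2, hic, hic']
    have := mul_le_mul_of_nonneg_left hi1 (sq_nonneg a)
    have := mul_le_mul_of_nonneg_left hi2 (sq_nonneg d)
    nlinarith [sq_nonneg a, sq_nonneg d]
  by_contra hcon
  push_neg at hcon
  have hnot2 : ¬ ∃ i j : ι, i ≠ j ∧ μ i ≤ c ∧ μ j ≤ c := by
    intro h
    exact absurd (SE.sortedEigs_second_le_of_two_indices hA h) (not_le.2 hcon)
  haveI : Nonempty ι := by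
    by_contra h
    exact hx (funext fun i => ((h ⟨i⟩).elim))
  obtain ⟨i₀, hi₀⟩ : ∃ i₀ : ι, ∀ i, i ≠ i₀ → c < μ i := by
    by_cases hex : ∃ i, μ i ≤ c
    · obtain ⟨i₀, h0⟩ := hex
      exact ⟨i₀, fun i hi => lt_of_not_ge fun hle => hnot2 ⟨i, i₀, hi, hle, h0⟩⟩
    · push_neg at hex
      exact ⟨Classical.arbitrary ι, fun i _ => hex i⟩
  set β : ℝ := b.repr vx i₀ with hβ
  set α : ℝ := b.repr vy i₀ with hα
  obtain ⟨z, hz0, hzi, hzR⟩ : ∃ z : EuclideanSpace ℝ ι, z ≠ 0 ∧ b.repr z i₀ = 0 ∧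
      (inner ℝ z (T z) : ℝ) ≤ c * inner ℝ z z := by
    by_cases hb0 : β = 0
    · refine ⟨vx, hvx0, by rw [← hβ]; exact hb0, ?_⟩
      have := hray 1 0
      simpa using this
    · refine ⟨α • vx + (-β) • vy, ?_, ?_, hray α (-β)⟩
      · intro hzz
        have hio' : (inner ℝ vy vx : ℝ) = 0 := by rw [real_inner_comm]; exact hio
        have h3 : (inner ℝ vy (α • vx + (-β) • vy) : ℝ) = -β * inner ℝ vy vy := by
          simp only [inner_add_right, real_inner_smul_right, hio']
          ring
        rw [hzz, inner_zero_right] at h3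
        have : (inner ℝ vy vy : ℝ) ≠ 0 := fun h => hvy0 (inner_self_eq_zero.1 h)
        have := mul_ne_zero (neg_ne_zero.2 hb0) this
        exact this h3.symm
      · have : b.repr (α • vx + (-β) • vy) i₀
            = α * b.repr vx i₀ + (-β) * b.repr vy i₀ := by
          rw [map_add, LinearIsometryEquiv.map_smul, LinearIsometryEquiv.map_smul]
          simp [PiLp.add_apply, PiLp.smul_apply]
        rw [this, ← hβ, ← hα]
        ring
  have hzq : (inner ℝ z (T z) : ℝ) = ∑ i, μ i * (b.repr z i)^2 :=
    SE.inner_toEuclideanLin_eq_sum hA z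
  have hzn : (inner ℝ z z : ℝ) = ∑ i, (b.repr z i)^2 := by
    rw [SE.inner_eq_sum_repr hA z z]
    exact Finset.sum_congr rfl fun i _ => (sq (b.repr z i)).symm ▸ by ring
  obtain ⟨i₁, hi₁⟩ : ∃ i₁, b.repr z i₁ ≠ 0 := by
    by_contra h
    push_neg at h
    exact hz0 (b.repr.map_eq_zero_iff.1 (WithLp.ofLp_injective 2 (funext fun i => h i : (b.repr z).ofLp = (0 : EuclideanSpace ℝ ι).ofLp)))
  have hi₁0 : i₁ ≠ i₀ := fun h => hi₁ (h ▸ hzi)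
  have hpos : 0 < ∑ i, (μ i - c) * (b.repr z i)^2 := by
    refine Finset.sum_pos' (fun i _ => ?_) ⟨i₁, Finset.mem_univ i₁, ?_⟩
    · by_cases h : i = i₀
      · subst h; rw [hzi]; simp
      · exact mul_nonneg (le_of_lt (sub_pos.2 (hi₀ i h))) (sq_nonneg _)
    · exact mul_pos (sub_pos.2 (hi₀ i₁ hi₁0)) (by positivity)
  have : c * inner ℝ z z < (inner ℝ z (T z) : ℝ) := by
    rw [hzq, hzn, Finset.mul_sum]
    have : ∑ i, (μ i - c) * (b.repr z i)^2
        = ∑ i, μ i * (b.repr z i)^2 - ∑ i, c * (b.repr z i)^2 := by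
      rw [← Finset.sum_sub_distrib]
      exact Finset.sum_congr rfl fun i _ => by ring
    linarith [hpos, this ▸ hpos]
  exact absurd hzR (not_le.2 this)

lemma SE.inner_eq_dot (v w : EuclideanSpace ℝ ι) :
    (inner ℝ v w : ℝ) = (v : ι → ℝ) ⬝ᵥ (w : ι → ℝ) := by
  rw [PiLp.inner_apply]
  norm_num [dotProduct]
  exact Finset.sum_congr rfl fun i _ => mul_comm _ _

/-- There is a nonzero vector orthogonal to `u` with Rayleigh quotient at most λ₂. -/
lemma SE.exists_test_vector (hA : A.IsHermitian) (hcard : 2 ≤ Fintype.card ι) (u : ι → ℝ) :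
    ∃ v : ι → ℝ, v ≠ 0 ∧ u ⬝ᵥ v = 0 ∧
      v ⬝ᵥ (A *ᵥ v) ≤ (sortedEigs hA)[1]! * (v ⬝ᵥ v) := by
  classical
  obtain ⟨i, j, hij, hi, hj⟩ := SE.exists_two_indices hA hcard
  set lam := (sortedEigs hA)[1]! with hlam
  set bi : ι → ℝ := ⇑(hA.eigenvectorBasis i) with hbi
  set bj : ι → ℝ := ⇑(hA.eigenvectorBasis j) with hbj
  have horth := hA.eigenvectorBasis.orthonormal
  rw [orthonormal_iff_ite] at horth
  have hii : bi ⬝ᵥ bi = 1 := by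
    have := horth i i; rw [SE.inner_eq_dot] at this; simpa using this
  have hjj : bj ⬝ᵥ bj = 1 := by
    have := horth j j; rw [SE.inner_eq_dot] at this; simpa using this
  have hijd : bi ⬝ᵥ bj = 0 := by
    have := horth i j; rw [SE.inner_eq_dot] at this; simpa [hij] using this
  have hjid : bj ⬝ᵥ bi = 0 := by rw [dotProduct_comm]; exact hijd
  have hAbi : A *ᵥ bi = hA.eigenvalues i • bi := hA.mulVec_eigenvectorBasis i
  have hAbj : A *ᵥ bj = hA.eigenvalues j • bj := hA.mulVec_eigenvectorBasis j
  set γ : ℝ := u ⬝ᵥ bi with hγ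
  set δ : ℝ := u ⬝ᵥ bj with hδ
  by_cases hδ0 : δ = 0
  · refine ⟨bj, ?_, hδ0, ?_⟩
    · intro h
      rw [h] at hjj
      simp at hjj
    · rw [hAbj, dotProduct_smul, smul_eq_mul, hjj]
      nlinarith [hj]
  · refine ⟨δ • bi - γ • bj, ?_, ?_, ?_⟩
    · intro h
      have : (δ • bi - γ • bj) ⬝ᵥ bi = δ := by
        simp [sub_dotProduct, smul_dotProduct, hii, hjid]
      rw [h] at this
      simp at this
      exact hδ0 this.symm
    · simp [dotProduct_sub, dotProduct_smul, ← hγ, ← hδ]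
      ring
    · rw [Matrix.mulVec_sub, Matrix.mulVec_smul, Matrix.mulVec_smul, hAbi, hAbj]
      simp only [sub_dotProduct, dotProduct_sub, smul_dotProduct,
        dotProduct_smul, smul_eq_mul, smul_smul, hii, hjj, hijd, hjid]
      nlinarith [sq_nonneg δ, sq_nonneg γ, hi, hj]

lemma SE.second_nonneg (hA : A.PosSemidef) (hcard : 2 ≤ Fintype.card ι) :
    (0:ℝ) ≤ (sortedEigs hA.isHermitian)[1]! := by
  set l := sortedEigs hA.isHermitian with hl
  have hlen : 1 < l.length := by
    have : l.length = Fintype.card ι := by simp [hl, sortedEigs]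
    omega
  rw [getElem!_pos l 1 hlen]
  have hmem : l[1] ∈ l := List.getElem_mem _
  have h2 : l[1] ∈ (Finset.univ.val.map hA.isHermitian.eigenvalues) :=
    (Multiset.mem_sort (α := ℝ) (· ≤ ·)).1 hmem
  obtain ⟨i, _, hi⟩ := Multiset.mem_map.1 h2
  rw [← hi]
  exact_mod_cast hA.eigenvalues_nonneg i

lemma SE.sum_elim_dot {n : ℕ} (a b c d : Fin n → ℝ) :
    (Sum.elim a b) ⬝ᵥ (Sum.elim c d) = a ⬝ᵥ c + b ⬝ᵥ d := by
  simp [dotProduct, Fintype.sum_sum_type]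

end Helpers

/-- In the k-to-k setup with `n ≥ 2`, the second-smallest eigenvalue of the
supra-Laplacian satisfies `λ₂(Q) ≤ min(λ₂(Q₁), λ₂(Q₂)) + kp`. -/
theorem stmt_4
    (n k : ℕ) (p : ℝ) (hn : 2 ≤ n) (hk : 1 ≤ k) (hkn : k ≤ n) (hp : 0 ≤ p)
    (Q₁ Q₂ B : Matrix (Fin n) (Fin n) ℝ)
    (hQ₁ : Q₁.PosSemidef) (hQ₂ : Q₂.PosSemidef)
    (hQ₁u : Q₁ *ᵥ (fun _ => (1:ℝ)) = 0) (hQ₂u : Q₂ *ᵥ (fun _ => (1:ℝ)) = 0)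
    (hB0 : ∀ i j, 0 ≤ B i j)
    (hBrow : ∀ i, ∑ j, B i j = (k:ℝ) * p) (hBcol : ∀ j, ∑ i, B i j = (k:ℝ) * p)
    (Q : Matrix (Fin n ⊕ Fin n) (Fin n ⊕ Fin n) ℝ)
    (hQdef : Q = Matrix.fromBlocks (Q₁ + ((k:ℝ) * p) • 1) (-B)
      (-Bᵀ) (Q₂ + ((k:ℝ) * p) • 1))
    (hQH : Q.IsHermitian) :
    (sortedEigs hQH)[1]! ≤
      min ((sortedEigs hQ₁.isHermitian)[1]!) ((sortedEigs hQ₂.isHermitian)[1]!)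
        + (k:ℝ) * p := by
  classical
  have hkp : 0 ≤ (k:ℝ) * p := by positivity
  have hcard : 2 ≤ Fintype.card (Fin n) := by simpa using hn
  set u1 : Fin n → ℝ := fun _ => 1 with hu1
  set x : Fin n ⊕ Fin n → ℝ := Sum.elim u1 u1 with hx
  have hQt : Qᵀ = Q := by
    rw [← Matrix.conjTranspose_eq_transpose_of_trivial]; exact hQH
  have hBu : B *ᵥ u1 = fun _ => (k:ℝ)*p := by
    funext i
    simp [Matrix.mulVec, dotProduct, hu1, hBrow i]
  have hBtu : Bᵀ *ᵥ u1 = fun _ => (k:ℝ)*p := by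
    funext j
    simp [Matrix.mulVec, dotProduct, Matrix.transpose_apply, hu1, hBcol j]
  have hkpu : ((k:ℝ)*p) • u1 = fun _ => (k:ℝ)*p := by
    funext i; simp [hu1]
  have hQx : Q *ᵥ x = 0 := by
    rw [hx, hQdef, Matrix.fromBlocks_mulVec]
    have h1 : Sum.elim u1 u1 ∘ Sum.inl = u1 := rfl
    have h2 : Sum.elim u1 u1 ∘ Sum.inr = u1 := rfl
    rw [h1, h2, Matrix.add_mulVec, Matrix.add_mulVec, Matrix.smul_mulVec,
      Matrix.one_mulVec, hQ₁u, hQ₂u,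
      Matrix.neg_mulVec, Matrix.neg_mulVec, hBu, hBtu, hkpu]
    funext i
    cases i <;> simp
  have hx0 : x ≠ 0 := by
    intro h
    have := congrFun h (Sum.inl ⟨0, by omega⟩)
    rw [hx] at this
    simp [hu1] at this
  have hxx : x ⬝ᵥ x = (n:ℝ) + n := by
    rw [hx, SE.sum_elim_dot]
    simp [hu1, dotProduct]
  have hqxx : x ⬝ᵥ (Q *ᵥ x) = 0 := by rw [hQx, dotProduct_zero]
  -- side 1
  have side1 : (sortedEigs hQH)[1]! ≤ (sortedEigs hQ₁.isHermitian)[1]! + (k:ℝ)*p := by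
    obtain ⟨v, hv0, huv, hvQ⟩ := SE.exists_test_vector hQ₁.isHermitian hcard u1
    set y : Fin n ⊕ Fin n → ℝ := Sum.elim v 0 with hy
    have hy0 : y ≠ 0 := by
      intro h
      exact hv0 (funext fun i => congrFun h (Sum.inl i))
    have hxy : x ⬝ᵥ y = 0 := by
      rw [hx, hy, SE.sum_elim_dot]
      simp [huv]
    have hQy : Q *ᵥ y = Sum.elim (Q₁ *ᵥ v + ((k:ℝ)*p) • v) (-(Bᵀ *ᵥ v)) := by
      rw [hy, hQdef, Matrix.fromBlocks_mulVec]
      have h1 : Sum.elim v (0 : Fin n → ℝ) ∘ Sum.inl = v := rfl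
      have h2 : Sum.elim v (0 : Fin n → ℝ) ∘ Sum.inr = 0 := rfl
      rw [h1, h2, Matrix.mulVec_zero, Matrix.mulVec_zero, Matrix.add_mulVec,
        Matrix.smul_mulVec, Matrix.one_mulVec, Matrix.neg_mulVec]
      simp
    have h2 : y ⬝ᵥ (Q *ᵥ y) ≤ ((sortedEigs hQ₁.isHermitian)[1]! + (k:ℝ)*p) * (y ⬝ᵥ y) := by
      rw [hQy, hy, SE.sum_elim_dot, SE.sum_elim_dot]
      simp only [zero_dotProduct, dotProduct_zero, add_zero]
      rw [dotProduct_add, dotProduct_smul, smul_eq_mul]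
      have hvv : (0:ℝ) ≤ v ⬝ᵥ v := Finset.sum_nonneg fun i _ => mul_self_nonneg _
      nlinarith [hvQ, hvv]
    have h1 : x ⬝ᵥ (Q *ᵥ x) ≤ ((sortedEigs hQ₁.isHermitian)[1]! + (k:ℝ)*p) * (x ⬝ᵥ x) := by
      rw [hqxx, hxx]
      have hc : (0:ℝ) ≤ (sortedEigs hQ₁.isHermitian)[1]! + (k:ℝ)*p :=
        add_nonneg (SE.second_nonneg hQ₁ hcard) hkp
      have : (0:ℝ) ≤ (n:ℝ) + n := by positivity
      exact mul_nonneg hc this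
    have hcross : x ⬝ᵥ (Q *ᵥ y) = 0 := by
      rw [Matrix.dotProduct_mulVec, ← Matrix.mulVec_transpose, hQt, hQx,
        zero_dotProduct]
    exact SE.second_eig_le hQH hx0 hy0 hxy h1 h2 hcross
  -- side 2
  have side2 : (sortedEigs hQH)[1]! ≤ (sortedEigs hQ₂.isHermitian)[1]! + (k:ℝ)*p := by
    obtain ⟨w, hw0, huw, hwQ⟩ := SE.exists_test_vector hQ₂.isHermitian hcard u1
    set y : Fin n ⊕ Fin n → ℝ := Sum.elim 0 w with hy
    have hy0 : y ≠ 0 := by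
      intro h
      exact hw0 (funext fun i => congrFun h (Sum.inr i))
    have hxy : x ⬝ᵥ y = 0 := by
      rw [hx, hy, SE.sum_elim_dot]
      simp [huw]
    have hQy : Q *ᵥ y = Sum.elim (-(B *ᵥ w)) (Q₂ *ᵥ w + ((k:ℝ)*p) • w) := by
      rw [hy, hQdef, Matrix.fromBlocks_mulVec]
      have h1 : Sum.elim (0 : Fin n → ℝ) w ∘ Sum.inl = 0 := rfl
      have h2 : Sum.elim (0 : Fin n → ℝ) w ∘ Sum.inr = w := rfl
      rw [h1, h2, Matrix.mulVec_zero, Matrix.mulVec_zero, Matrix.add_mulVec,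
        Matrix.smul_mulVec, Matrix.one_mulVec, Matrix.neg_mulVec]
      simp
    have h2 : y ⬝ᵥ (Q *ᵥ y) ≤ ((sortedEigs hQ₂.isHermitian)[1]! + (k:ℝ)*p) * (y ⬝ᵥ y) := by
      rw [hQy, hy, SE.sum_elim_dot, SE.sum_elim_dot]
      simp only [zero_dotProduct, dotProduct_zero, zero_add]
      rw [dotProduct_add, dotProduct_smul, smul_eq_mul]
      have hww : (0:ℝ) ≤ w ⬝ᵥ w := Finset.sum_nonneg fun i _ => mul_self_nonneg _
      nlinarith [hwQ, hww]
    have h1 : x ⬝ᵥ (Q *ᵥ x) ≤ ((sortedEigs hQ₂.isHermitian)[1]! + (k:ℝ)*p) * (x ⬝ᵥ x) := by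
      rw [hqxx, hxx]
      have hc : (0:ℝ) ≤ (sortedEigs hQ₂.isHermitian)[1]! + (k:ℝ)*p :=
        add_nonneg (SE.second_nonneg hQ₂ hcard) hkp
      have : (0:ℝ) ≤ (n:ℝ) + n := by positivity
      exact mul_nonneg hc this
    have hcross : x ⬝ᵥ (Q *ᵥ y) = 0 := by
      rw [Matrix.dotProduct_mulVec, ← Matrix.mulVec_transpose, hQt, hQx,
        zero_dotProduct]
    exact SE.second_eig_le hQH hx0 hy0 hxy h1 h2 hcross
  have := le_min side1 side2
  rwa [min_add_add_right] at this
end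

section
/- Let B be an n×n real matrix with nonnegative entries such that Bu = s·u and Bᵀu = s·u for some s ≥ 0. Then the 2n×2n block matrix C = [[s·I, −B], [−Bᵀ, s·I]] is symmetric positive semidefinite. -/
open Matrix

/-- If `B` is a nonnegative `n×n` matrix with all row sums and column sums
equal to `s ≥ 0`, then the block matrix `C = [[s·I, −B], [−Bᵀ, s·I]]` is symmetric
positive semidefinite. -/
theorem stmt_7
    (n : ℕ) (B : Matrix (Fin n) (Fin n) ℝ) (s : ℝ) (hs : 0 ≤ s)
    (hB0 : ∀ i j, 0 ≤ B i j)
    (hBrow : ∀ i, ∑ j, B i j = s) (hBcol : ∀ j, ∑ i, B i j = s) :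
    (Matrix.fromBlocks (s • (1 : Matrix (Fin n) (Fin n) ℝ)) (-B)
      (-Bᵀ) (s • (1 : Matrix (Fin n) (Fin n) ℝ))).PosSemidef := by
  rw [Matrix.posSemidef_iff_dotProduct_mulVec]
  constructor
  · unfold Matrix.IsHermitian
    rw [Matrix.fromBlocks_conjTranspose]
    simp
  · intro x
    set f : Fin n → ℝ := fun i => x (Sum.inl i)
    set g : Fin n → ℝ := fun j => x (Sum.inr j)
    have h1 : ∀ i, s * f i ^ 2 = ∑ j, B i j * f i ^ 2 := fun i => by
      rw [← Finset.sum_mul, hBrow]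
    have h2 : ∀ j, s * g j ^ 2 = ∑ i, B i j * g j ^ 2 := fun j => by
      rw [← Finset.sum_mul, hBcol]
    have key : star x ⬝ᵥ (Matrix.fromBlocks (s • (1 : Matrix (Fin n) (Fin n) ℝ)) (-B)
        (-Bᵀ) (s • (1 : Matrix (Fin n) (Fin n) ℝ))) *ᵥ x
        = ∑ i, ∑ j, B i j * (f i - g j)^2 := by
      have hdot : star x ⬝ᵥ (Matrix.fromBlocks (s • (1 : Matrix (Fin n) (Fin n) ℝ)) (-B)
          (-Bᵀ) (s • (1 : Matrix (Fin n) (Fin n) ℝ))) *ᵥ x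
          = (∑ i, f i * (s * f i - ∑ j, B i j * g j))
            + ∑ j, g j * ((- ∑ i, Bᵀ j i * f i) + s * g j) := by
        simp [dotProduct, Matrix.mulVec, Fintype.sum_sum_type,
          Matrix.fromBlocks, Matrix.one_apply, Finset.mul_sum, f, g, mul_comm,
          Finset.sum_ite_eq, Finset.sum_ite_eq', sub_eq_add_neg, Finset.sum_add_distrib]
      rw [hdot]
      have e1 : ∑ i, f i * (s * f i - ∑ j, B i j * g j)
          = ∑ i, ∑ j, (B i j * f i ^ 2 - B i j * (f i * g j)) := by
        refine Finset.sum_congr rfl fun i _ => ?_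
        rw [mul_sub, Finset.mul_sum, show f i * (s * f i) = s * f i ^ 2 by ring, h1 i,
          ← Finset.sum_sub_distrib]
        exact Finset.sum_congr rfl fun j _ => by ring
      have e2 : ∑ j, g j * ((- ∑ i, Bᵀ j i * f i) + s * g j)
          = ∑ j, ∑ i, (B i j * g j ^ 2 - B i j * (f i * g j)) := by
        refine Finset.sum_congr rfl fun j _ => ?_
        rw [mul_add, mul_neg, Finset.mul_sum, show g j * (s * g j) = s * g j ^ 2 by ring,
          h2 j]
        rw [← Finset.sum_neg_distrib, ← Finset.sum_add_distrib]
        refine Finset.sum_congr rfl fun i _ => ?_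
        simp only [Matrix.transpose_apply]; ring
      rw [e1, e2, Finset.sum_comm (s := Finset.univ) (t := Finset.univ)
        (f := fun j i => B i j * g j ^ 2 - B i j * (f i * g j)), ← Finset.sum_add_distrib]
      refine Finset.sum_congr rfl fun i _ => ?_
      rw [← Finset.sum_add_distrib]
      exact Finset.sum_congr rfl fun j _ => by ring
    rw [key]
    have : (0:ℝ) ≤ ∑ i, ∑ j, B i j * (f i - g j)^2 :=
      Finset.sum_nonneg fun i _ => Finset.sum_nonneg fun j _ =>
        mul_nonneg (hB0 i j) (sq_nonneg _)
    simpa using this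
end

section
/- In the k-to-k setup with n ≥ 2, the third-smallest eigenvalue of the supra-Laplacian is bounded below by the layers' algebraic connectivities: λ₃(Q) ≥ min(λ₂(Q₁), λ₂(Q₂)). -/
open Matrix

open scoped RealInnerProductSpace

section Aux

variable {ι : Type*} [Fintype ι] [DecidableEq ι]

lemma inner_eigen {A : Matrix ι ι ℝ} (hA : A.IsHermitian) (j : ι) (x : EuclideanSpace ℝ ι) :
    ⟪hA.eigenvectorBasis j, (WithLp.toLp 2 (A *ᵥ x) : EuclideanSpace ℝ ι)⟫ =
      hA.eigenvalues j * ⟪hA.eigenvectorBasis j, x⟫ := by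
  have h1 : ∀ a b : EuclideanSpace ℝ ι, ⟪a, b⟫ = a ⬝ᵥ b := by
    intro a b; rw [EuclideanSpace.inner_eq_star_dotProduct, dotProduct_comm]; rfl
  rw [h1, h1, WithLp.ofLp_toLp]
  have h2 : (hA.eigenvectorBasis j : EuclideanSpace ℝ ι) ⬝ᵥ (A *ᵥ x) =
      (A *ᵥ (hA.eigenvectorBasis j : EuclideanSpace ℝ ι)) ⬝ᵥ x := by
    rw [dotProduct_mulVec, ← mulVec_transpose]
    have h3 : Aᵀ = A := hA
    rw [h3]
  rw [h2]
  have h4 := hA.mulVec_eigenvectorBasis j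
  have h5 : (A *ᵥ (hA.eigenvectorBasis j : EuclideanSpace ℝ ι)) ⬝ᵥ x
      = (hA.eigenvalues j • (hA.eigenvectorBasis j : EuclideanSpace ℝ ι) : ι → ℝ) ⬝ᵥ x := by
    exact congrArg (fun v => v ⬝ᵥ x) h4
  rw [h5, smul_dotProduct, smul_eq_mul]

lemma rayleigh_repr {A : Matrix ι ι ℝ} (hA : A.IsHermitian) (x : EuclideanSpace ℝ ι) :
    x ⬝ᵥ (A *ᵥ x) = ∑ j, hA.eigenvalues j * ⟪hA.eigenvectorBasis j, x⟫ ^ 2 := by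
  have h1 : ∀ a b : EuclideanSpace ℝ ι, ⟪a, b⟫ = a ⬝ᵥ b := by
    intro a b; rw [EuclideanSpace.inner_eq_star_dotProduct, dotProduct_comm]; rfl
  have := (hA.eigenvectorBasis).sum_inner_mul_inner x (WithLp.toLp 2 (A *ᵥ x) : EuclideanSpace ℝ ι)
  rw [h1] at this
  simp only [WithLp.ofLp_toLp] at this
  rw [← this]
  congr 1; funext j
  rw [inner_eigen hA j x, real_inner_comm x]
  ring

lemma self_repr {A : Matrix ι ι ℝ} (hA : A.IsHermitian) (x : EuclideanSpace ℝ ι) :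
    x ⬝ᵥ x = ∑ j, ⟪hA.eigenvectorBasis j, x⟫ ^ 2 := by
  have h1 : ∀ a b : EuclideanSpace ℝ ι, ⟪a, b⟫ = a ⬝ᵥ b := by
    intro a b; rw [EuclideanSpace.inner_eq_star_dotProduct, dotProduct_comm]; rfl
  have := (hA.eigenvectorBasis).sum_inner_mul_inner x x
  rw [h1] at this
  rw [← this]
  congr 1; funext j
  rw [real_inner_comm x]; ring
lemma sortedEigs_aux {A : Matrix ι ι ℝ} (hA : A.IsHermitian)
    (l : List ℝ) (hl : l = Multiset.sort (Finset.univ.val.map hA.eigenvalues) (· ≤ ·))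
    (p : ℝ → Prop) [DecidablePred p] :
    l.countP (fun a => decide (p a)) = (Finset.univ.filter (fun i => p (hA.eigenvalues i))).card := by
  have h1 : (l : Multiset ℝ) = Finset.univ.val.map hA.eigenvalues := by
    rw [hl]; exact Multiset.sort_eq _ _
  have h2 := Multiset.coe_countP (p := p) l
  rw [← h2, h1, Multiset.countP_map]
  rfl

lemma sortedEigs_len {A : Matrix ι ι ℝ} (hA : A.IsHermitian)
    (l : List ℝ) (hl : l = Multiset.sort (Finset.univ.val.map hA.eigenvalues) (· ≤ ·)) :
    l.length = Fintype.card ι := by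
  rw [hl, Multiset.length_sort, Multiset.card_map]; rfl

-- number of eigenvalues strictly below the m-th sorted one is at most m
lemma count_lt_le {A : Matrix ι ι ℝ} (hA : A.IsHermitian)
    (l : List ℝ) (hl : l = Multiset.sort (Finset.univ.val.map hA.eigenvalues) (· ≤ ·))
    (m : ℕ) (hm : m < l.length) :
    (Finset.univ.filter (fun i => hA.eigenvalues i < l[m])).card ≤ m := by
  have haux : (Finset.univ.filter (fun i => hA.eigenvalues i < l[m])).card
      = l.countP (fun a => decide (a < l[m])) := by
    rw [sortedEigs_aux hA l hl (fun a => a < l[m])]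
  rw [haux]
  have hsort : l.Pairwise (· ≤ ·) := by rw [hl]; exact Multiset.pairwise_sort _ _
  obtain ⟨v, hv⟩ : ∃ v, v = l[m] := ⟨_, rfl⟩
  rw [← hv]
  have hsplit : l.countP (fun a => decide (a < v)) =
      (l.take m).countP (fun a => decide (a < v)) +
      (l.drop m).countP (fun a => decide (a < v)) := by
    conv_lhs => rw [← List.take_append_drop m l]
    rw [List.countP_append]
  have hdrop : (l.drop m).countP (fun a => decide (a < v)) = 0 := by
    rw [List.countP_eq_zero]
    intro a ha
    obtain ⟨j, hj, rfl⟩ := List.getElem_of_mem ha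
    rw [List.getElem_drop]
    simp only [decide_eq_true_eq, not_lt]
    rw [List.length_drop] at hj
    have hmj : m + j < l.length := by omega
    have h7 := hsort.rel_get_of_le (a := ⟨m, hm⟩) (b := ⟨m + j, hmj⟩)
      (by simp [Fin.le_def])
    rw [hv]
    simpa using h7
  calc l.countP (fun a => decide (a < v))
      = (l.take m).countP (fun a => decide (a < v)) + 0 := by rw [hsplit, hdrop]
    _ = (l.take m).countP (fun a => decide (a < v)) := Nat.add_zero _
    _ ≤ (l.take m).length := List.countP_le_length
    _ ≤ m := by rw [List.length_take]; exact min_le_left _ _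

-- at least m+1 eigenvalues are ≤ the m-th sorted one
lemma le_count_le {A : Matrix ι ι ℝ} (hA : A.IsHermitian)
    (l : List ℝ) (hl : l = Multiset.sort (Finset.univ.val.map hA.eigenvalues) (· ≤ ·))
    (m : ℕ) (hm : m < l.length) :
    m + 1 ≤ (Finset.univ.filter (fun i => hA.eigenvalues i ≤ l[m])).card := by
  have haux : (Finset.univ.filter (fun i => hA.eigenvalues i ≤ l[m])).card
      = l.countP (fun a => decide (a ≤ l[m])) := by
    rw [sortedEigs_aux hA l hl (fun a => a ≤ l[m])]
  rw [haux]
  have hsort : l.Pairwise (· ≤ ·) := by rw [hl]; exact Multiset.pairwise_sort _ _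
  have htake : (l.take (m+1)).countP (fun a => decide (a ≤ l[m])) = (l.take (m+1)).length := by
    rw [List.countP_eq_length]
    intro a ha
    obtain ⟨i, hi, rfl⟩ := List.getElem_of_mem ha
    rw [List.getElem_take]
    simp only [decide_eq_true_eq]
    have hilen : i < l.length := lt_of_lt_of_le hi (by simpa using List.length_take_le (m+1) l)
    have hile : i < m + 1 := lt_of_lt_of_le hi (by rw [List.length_take]; exact min_le_left _ _)
    have h7 := hsort.rel_get_of_le (a := ⟨i, hilen⟩) (b := ⟨m, hm⟩)
      (by simp only [Fin.le_def]; omega)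
    simpa using h7
  calc m + 1 = (l.take (m+1)).length := by rw [List.length_take]; omega
    _ = (l.take (m+1)).countP _ := htake.symm
    _ ≤ l.countP _ := (List.take_sublist _ _).countP_le

lemma ray_lower {A : Matrix ι ι ℝ} (hA : A.IsHermitian) (c : ℝ) (x : EuclideanSpace ℝ ι)
    (h : ∀ j, hA.eigenvalues j < c → ⟪hA.eigenvectorBasis j, x⟫ = 0) :
    c * (x ⬝ᵥ x) ≤ x ⬝ᵥ (A *ᵥ x) := by
  rw [rayleigh_repr hA x, self_repr hA x, Finset.mul_sum]
  apply Finset.sum_le_sum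
  intro j _
  by_cases hj : hA.eigenvalues j < c
  · simp [h j hj]
  · exact mul_le_mul_of_nonneg_right (not_lt.1 hj) (sq_nonneg _)

lemma ray_upper {A : Matrix ι ι ℝ} (hA : A.IsHermitian) (c : ℝ) (x : EuclideanSpace ℝ ι)
    (h : ∀ j, c < hA.eigenvalues j → ⟪hA.eigenvectorBasis j, x⟫ = 0) :
    x ⬝ᵥ (A *ᵥ x) ≤ c * (x ⬝ᵥ x) := by
  rw [rayleigh_repr hA x, self_repr hA x, Finset.mul_sum]
  apply Finset.sum_le_sum
  intro j _
  by_cases hj : c < hA.eigenvalues j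
  · simp [h j hj]
  · exact mul_le_mul_of_nonneg_right (not_lt.1 hj) (sq_nonneg _)

lemma lap_bound {A : Matrix ι ι ℝ} (hA : A.PosSemidef)
    (hu : A *ᵥ (fun _ => (1:ℝ)) = 0)
    (l : List ℝ) (hl : l = Multiset.sort (Finset.univ.val.map hA.isHermitian.eigenvalues) (· ≤ ·))
    (hm : 1 < l.length) (x : ι → ℝ) (hx : ∑ i, x i = 0) :
    l[1] * (x ⬝ᵥ x) ≤ x ⬝ᵥ (A *ᵥ x) := by
  have hne : Nonempty ι := by
    rw [sortedEigs_len hA.isHermitian l hl] at hm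
    exact Fintype.card_pos_iff.mp (by omega)
  set b := hA.isHermitian.eigenvectorBasis with hb
  apply ray_lower hA.isHermitian l[1] (WithLp.toLp 2 x)
  intro j hj
  have hcard := count_lt_le hA.isHermitian l hl 1 hm
  have hnotin : ∀ i, i ≠ j → ¬ (hA.isHermitian.eigenvalues i < l[1]) := by
    intro i hij hi
    have hsub : ({j, i} : Finset ι) ⊆ Finset.univ.filter (fun r => hA.isHermitian.eigenvalues r < l[1]) := by
      intro r hr
      simp only [Finset.mem_insert, Finset.mem_singleton] at hr
      rcases hr with rfl | rfl <;> simp [hj, hi]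
    have h2 : ({j, i} : Finset ι).card = 2 := Finset.card_pair (Ne.symm hij)
    have := Finset.card_le_card hsub
    omega
  have hpos : ∀ i, i ≠ j → 0 < hA.isHermitian.eigenvalues i := by
    intro i hij
    have h0 : (0:ℝ) ≤ hA.isHermitian.eigenvalues j := hA.eigenvalues_nonneg j
    have := hnotin i hij
    push_neg at this
    linarith
  -- coefficients of the all-ones vector
  set u : EuclideanSpace ℝ ι := WithLp.toLp 2 (fun _ => (1:ℝ)) with hu'
  have hd : ∀ i, hA.isHermitian.eigenvalues i * ⟪b i, u⟫ = 0 := by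
    intro i
    rw [← inner_eigen hA.isHermitian i u]
    have : (WithLp.toLp 2 (A *ᵥ u) : EuclideanSpace ℝ ι) = 0 := by rw [hu']; simp [hu]
    rw [this, inner_zero_right]
  have hd0 : ∀ i, i ≠ j → ⟪b i, u⟫ = 0 := by
    intro i hij
    have := hd i
    have hpi := hpos i hij
    rcases mul_eq_zero.mp this with h | h
    · exact absurd h (ne_of_gt hpi)
    · exact h
  have hurep : u = ⟪b j, u⟫ • b j := by
    have hsum := (hA.isHermitian.eigenvectorBasis).sum_repr' u
    rw [← hb] at hsum
    calc u = ∑ i, ⟪b i, u⟫ • b i := hsum.symm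
      _ = ⟪b j, u⟫ • b j := Finset.sum_eq_single j
          (fun i _ hij => by rw [hd0 i hij, zero_smul])
          (fun hji => absurd (Finset.mem_univ j) hji)
  have hdj : ⟪b j, u⟫ ≠ 0 := by
    intro h0
    rw [h0, zero_smul] at hurep
    have : (1:ℝ) = 0 := congrFun (congrArg (fun (v : EuclideanSpace ℝ ι) => (v : ι → ℝ)) hurep) (Classical.arbitrary ι)
    norm_num at this
  have hux : ⟪u, (WithLp.toLp 2 x : EuclideanSpace ℝ ι)⟫ = 0 := by
    have h9 : ⟪u, (WithLp.toLp 2 x : EuclideanSpace ℝ ι)⟫ = (u : ι → ℝ) ⬝ᵥ x := by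
      rw [EuclideanSpace.inner_eq_star_dotProduct, dotProduct_comm]; rfl
    rw [h9]
    simpa [dotProduct, hu'] using hx
  rw [hurep, real_inner_smul_left] at hux
  rcases mul_eq_zero.mp hux with h | h
  · exact absurd h hdj
  · exact h


end Aux

/-- In the k-to-k setup with `n ≥ 2`, the third-smallest eigenvalue of the
supra-Laplacian satisfies `λ₃(Q) ≥ min(λ₂(Q₁), λ₂(Q₂))`. -/
theorem stmt_8
    (n k : ℕ) (p : ℝ) (hn : 2 ≤ n) (hk : 1 ≤ k) (hkn : k ≤ n) (hp : 0 ≤ p)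
    (Q₁ Q₂ B : Matrix (Fin n) (Fin n) ℝ)
    (hQ₁ : Q₁.PosSemidef) (hQ₂ : Q₂.PosSemidef)
    (hQ₁u : Q₁ *ᵥ (fun _ => (1:ℝ)) = 0) (hQ₂u : Q₂ *ᵥ (fun _ => (1:ℝ)) = 0)
    (hB0 : ∀ i j, 0 ≤ B i j)
    (hBrow : ∀ i, ∑ j, B i j = (k:ℝ) * p) (hBcol : ∀ j, ∑ i, B i j = (k:ℝ) * p)
    (Q : Matrix (Fin n ⊕ Fin n) (Fin n ⊕ Fin n) ℝ)
    (hQdef : Q = Matrix.fromBlocks (Q₁ + ((k:ℝ) * p) • 1) (-B)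
      (-Bᵀ) (Q₂ + ((k:ℝ) * p) • 1))
    (hQH : Q.IsHermitian) :
    min ((sortedEigs hQ₁.isHermitian)[1]!) ((sortedEigs hQ₂.isHermitian)[1]!) ≤
      (sortedEigs hQH)[2]! := by
  classical
  set l₁ := sortedEigs hQ₁.isHermitian with hl₁
  set l₂ := sortedEigs hQ₂.isHermitian with hl₂
  set lQ := sortedEigs hQH with hlQ
  have hl₁def : l₁ = Multiset.sort (Finset.univ.val.map hQ₁.isHermitian.eigenvalues) (· ≤ ·) := rfl
  have hl₂def : l₂ = Multiset.sort (Finset.univ.val.map hQ₂.isHermitian.eigenvalues) (· ≤ ·) := rfl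
  have hlQdef : lQ = Multiset.sort (Finset.univ.val.map hQH.eigenvalues) (· ≤ ·) := rfl
  have hlen₁ : l₁.length = n := by rw [sortedEigs_len _ l₁ hl₁def, Fintype.card_fin]
  have hlen₂ : l₂.length = n := by rw [sortedEigs_len _ l₂ hl₂def, Fintype.card_fin]
  have hlenQ : lQ.length = n + n := by
    rw [sortedEigs_len _ lQ hlQdef]; simp
  have h1l₁ : 1 < l₁.length := by omega
  have h1l₂ : 1 < l₂.length := by omega
  have h2lQ : 2 < lQ.length := by omega
  have hg₁ : l₁[1]! = l₁[1] := getElem!_pos l₁ 1 h1l₁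
  have hg₂ : l₂[1]! = l₂[1] := getElem!_pos l₂ 1 h1l₂
  have hgQ : lQ[2]! = lQ[2] := getElem!_pos lQ 2 h2lQ
  rw [hg₁, hg₂, hgQ]
  set ν₁ := l₁[1] with hν₁
  set ν₂ := l₂[1] with hν₂
  set μ := lQ[2] with hμ
  -- the set of eigenvalues of Q that are ≤ μ has at least 3 elements
  have hT := le_count_le hQH lQ hlQdef 2 h2lQ
  obtain ⟨T', hT'sub, hT'card⟩ := Finset.exists_subset_card_eq hT
  set e : Fin 3 → (Fin n ⊕ Fin n) := fun i => (T'.equivFin.symm (Fin.cast hT'card.symm i) : _)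
    with he
  have he_inj : Function.Injective e := by
    intro a b hab
    have := Subtype.val_injective hab
    have := T'.equivFin.symm.injective this
    simpa [Fin.ext_iff] using congrArg Fin.val this
  have he_mem : ∀ i, hQH.eigenvalues (e i) ≤ μ := by
    intro i
    have h1 : e i ∈ T' := (T'.equivFin.symm (Fin.cast hT'card.symm i)).2
    have h2 := hT'sub h1
    simpa using (Finset.mem_filter.mp h2).2
  set b := hQH.eigenvectorBasis with hb
  -- a nonzero coefficient vector orthogonal to the two constraints
  set M : Matrix (Fin 2) (Fin 3) ℝ := Matrix.of (fun r i =>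
    if r = 0 then ∑ s, b (e i) (Sum.inl s) else ∑ s, b (e i) (Sum.inr s)) with hM
  obtain ⟨c, hcmem, hcne⟩ : ∃ c, c ∈ LinearMap.ker M.mulVecLin ∧ c ≠ 0 := by
    have hlt : Module.finrank ℝ (Fin 2 → ℝ) < Module.finrank ℝ (Fin 3 → ℝ) := by
      simp [Module.finrank_fintype_fun_eq_card]
    exact (Submodule.ne_bot_iff _).mp (LinearMap.ker_ne_bot_of_finrank_lt hlt)
  have hMc : M *ᵥ c = 0 := hcmem
  set w : (Fin n ⊕ Fin n) → ℝ := fun z => ∑ i, c i * b (e i) z with hw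
  set x : Fin n → ℝ := fun r => w (Sum.inl r) with hx
  set y : Fin n → ℝ := fun r => w (Sum.inr r) with hy
  have hwelim : w = Sum.elim x y := by funext z; cases z <;> rfl
  -- dot products against w
  have hwdot : ∀ v : (Fin n ⊕ Fin n) → ℝ, v ⬝ᵥ w = ∑ i, c i * (v ⬝ᵥ (b (e i) : (Fin n ⊕ Fin n) → ℝ)) := by
    intro v
    unfold dotProduct
    calc ∑ z, v z * w z = ∑ z, ∑ i, c i * (v z * b (e i) z) := by
          apply Finset.sum_congr rfl
          intro z _
          have hwz : w z = ∑ i, c i * b (e i) z := rfl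
          rw [hwz, Finset.mul_sum]
          apply Finset.sum_congr rfl
          intro i _
          ring
      _ = ∑ i, ∑ z, c i * (v z * b (e i) z) := Finset.sum_comm
      _ = ∑ i, c i * ∑ z, v z * b (e i) z := by
          apply Finset.sum_congr rfl
          intro i _
          rw [Finset.mul_sum]
  -- orthonormality at the dot-product level
  have horth : ∀ j j' : Fin n ⊕ Fin n, ((b j : EuclideanSpace ℝ (Fin n ⊕ Fin n)) : (Fin n ⊕ Fin n) → ℝ) ⬝ᵥ (b j' : (Fin n ⊕ Fin n) → ℝ) = if j = j' then 1 else 0 := by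
    intro j j'
    have := orthonormal_iff_ite.mp (hQH.eigenvectorBasis).orthonormal j j'
    rw [← hb] at this
    rw [EuclideanSpace.inner_eq_star_dotProduct, dotProduct_comm] at this
    exact this
  have hbw : ∀ j : Fin n ⊕ Fin n, ((b j : EuclideanSpace ℝ (Fin n ⊕ Fin n)) : (Fin n ⊕ Fin n) → ℝ) ⬝ᵥ w = ∑ i, c i * (if j = e i then 1 else 0) := by
    intro j
    rw [hwdot]
    apply Finset.sum_congr rfl
    intro i _
    rw [horth j (e i)]
  -- if the eigenvalue of Q at j exceeds μ, then b j ⊥ w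
  have hvanish : ∀ j : Fin n ⊕ Fin n, μ < hQH.eigenvalues j →
      ((b j : EuclideanSpace ℝ (Fin n ⊕ Fin n)) : (Fin n ⊕ Fin n) → ℝ) ⬝ᵥ w = 0 := by
    intro j hjμ
    rw [hbw]
    apply Finset.sum_eq_zero
    intro i _
    have : j ≠ e i := by
      intro hji
      rw [hji] at hjμ
      exact absurd (he_mem i) (not_le.mpr hjμ)
    simp [this]
  -- norm of w
  have hww : w ⬝ᵥ w = ∑ i, c i * c i := by
    rw [hwdot w]
    apply Finset.sum_congr rfl
    intro i _
    congr 1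
    rw [dotProduct_comm, hbw]
    rw [Finset.sum_eq_single i]
    · simp
    · intro i' _ hi'
      have : e i ≠ e i' := fun hcon => hi' (he_inj hcon).symm
      simp [this]
    · intro hni; exact absurd (Finset.mem_univ i) hni
  have hwpos : 0 < w ⬝ᵥ w := by
    rw [hww]
    have ⟨i0, hi0⟩ : ∃ i0, c i0 ≠ 0 := by
      by_contra hcon
      push_neg at hcon
      exact hcne (funext hcon)
    apply Finset.sum_pos'
    · intro i _; exact mul_self_nonneg _
    · exact ⟨i0, Finset.mem_univ i0, mul_self_pos.mpr hi0⟩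
  -- the two constraint sums vanish
  have hxsum : ∑ r, x r = 0 := by
    have h0 := congrFun hMc 0
    have hM0 : (M *ᵥ c) 0 = ∑ i, (∑ s, b (e i) (Sum.inl s)) * c i := by
      unfold mulVec dotProduct
      apply Finset.sum_congr rfl
      intro i _
      simp [hM]
    rw [hM0] at h0
    calc ∑ r, x r = ∑ r, ∑ i, c i * b (e i) (Sum.inl r) := rfl
      _ = ∑ i, ∑ r, c i * b (e i) (Sum.inl r) := Finset.sum_comm
      _ = ∑ i, (∑ s, b (e i) (Sum.inl s)) * c i := by
          apply Finset.sum_congr rfl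
          intro i _
          rw [← Finset.mul_sum, mul_comm]
      _ = 0 := h0
  have hysum : ∑ r, y r = 0 := by
    have h0 := congrFun hMc 1
    have hM1 : (M *ᵥ c) 1 = ∑ i, (∑ s, b (e i) (Sum.inr s)) * c i := by
      unfold mulVec dotProduct
      apply Finset.sum_congr rfl
      intro i _
      simp [hM]
    rw [hM1] at h0
    calc ∑ r, y r = ∑ r, ∑ i, c i * b (e i) (Sum.inr r) := rfl
      _ = ∑ i, ∑ r, c i * b (e i) (Sum.inr r) := Finset.sum_comm
      _ = ∑ i, (∑ s, b (e i) (Sum.inr s)) * c i := by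
          apply Finset.sum_congr rfl
          intro i _
          rw [← Finset.mul_sum, mul_comm]
      _ = 0 := h0
  -- upper bound for the Rayleigh quotient of Q at w
  have hupper : w ⬝ᵥ (Q *ᵥ w) ≤ μ * (w ⬝ᵥ w) := by
    apply ray_upper hQH μ (WithLp.toLp 2 w)
    intro j hj
    rw [EuclideanSpace.inner_eq_star_dotProduct, dotProduct_comm]
    exact hvanish j hj
  -- block expansion
  have hexp : w ⬝ᵥ (Q *ᵥ w) = x ⬝ᵥ (Q₁ *ᵥ x) + y ⬝ᵥ (Q₂ *ᵥ y)
      + (((k:ℝ)*p) * (x ⬝ᵥ x) + ((k:ℝ)*p) * (y ⬝ᵥ y) - 2 * (x ⬝ᵥ (B *ᵥ y))) := by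
    rw [hQdef]
    rw [hwelim]
    rw [fromBlocks_mulVec, sumElim_dotProduct_sumElim]
    simp only [add_mulVec, neg_mulVec, smul_mulVec, one_mulVec, dotProduct_add,
      dotProduct_neg, dotProduct_smul, smul_eq_mul, Sum.elim_comp_inl, Sum.elim_comp_inr]
    have hTr : y ⬝ᵥ (Bᵀ *ᵥ x) = x ⬝ᵥ (B *ᵥ y) := by
      rw [mulVec_transpose, dotProduct_comm, ← dotProduct_mulVec]
    rw [hTr]
    ring
  -- the coupling part is nonnegative
  have hcross : 0 ≤ ((k:ℝ)*p) * (x ⬝ᵥ x) + ((k:ℝ)*p) * (y ⬝ᵥ y) - 2 * (x ⬝ᵥ (B *ᵥ y)) := by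
    have h1 : ((k:ℝ)*p) * (x ⬝ᵥ x) = ∑ i, ∑ j, B i j * (x i)^2 := by
      unfold dotProduct
      rw [Finset.mul_sum]
      apply Finset.sum_congr rfl
      intro i _
      rw [← hBrow i, Finset.sum_mul]
      apply Finset.sum_congr rfl
      intro j _
      ring
    have h2 : ((k:ℝ)*p) * (y ⬝ᵥ y) = ∑ i, ∑ j, B i j * (y j)^2 := by
      unfold dotProduct
      rw [Finset.mul_sum]
      rw [Finset.sum_comm (f := fun i j => B i j * (y j)^2)]
      apply Finset.sum_congr rfl
      intro j _
      rw [← hBcol j, Finset.sum_mul]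
      apply Finset.sum_congr rfl
      intro i _
      ring
    have h3 : x ⬝ᵥ (B *ᵥ y) = ∑ i, ∑ j, B i j * (x i * y j) := by
      unfold mulVec dotProduct
      apply Finset.sum_congr rfl
      intro i _
      rw [Finset.mul_sum]
      apply Finset.sum_congr rfl
      intro j _
      ring
    rw [h1, h2, h3, ← Finset.sum_add_distrib, Finset.mul_sum, ← Finset.sum_sub_distrib]
    apply Finset.sum_nonneg
    intro i _
    rw [← Finset.sum_add_distrib, Finset.mul_sum, ← Finset.sum_sub_distrib]
    apply Finset.sum_nonneg
    intro j _
    nlinarith [hB0 i j, sq_nonneg (x i - y j)]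
  -- lower bounds coming from the two layers
  have hxQ : ν₁ * (x ⬝ᵥ x) ≤ x ⬝ᵥ (Q₁ *ᵥ x) := lap_bound hQ₁ hQ₁u l₁ hl₁def h1l₁ x hxsum
  have hyQ : ν₂ * (y ⬝ᵥ y) ≤ y ⬝ᵥ (Q₂ *ᵥ y) := lap_bound hQ₂ hQ₂u l₂ hl₂def h1l₂ y hysum
  have hxx0 : 0 ≤ x ⬝ᵥ x := Finset.sum_nonneg (fun i _ => mul_self_nonneg _)
  have hyy0 : 0 ≤ y ⬝ᵥ y := Finset.sum_nonneg (fun i _ => mul_self_nonneg _)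
  have hsplitw : w ⬝ᵥ w = x ⬝ᵥ x + y ⬝ᵥ y := by
    rw [hwelim, sumElim_dotProduct_sumElim]
  have hchain : min ν₁ ν₂ * (w ⬝ᵥ w) ≤ μ * (w ⬝ᵥ w) := by
    calc min ν₁ ν₂ * (w ⬝ᵥ w) = min ν₁ ν₂ * (x ⬝ᵥ x) + min ν₁ ν₂ * (y ⬝ᵥ y) := by
          rw [hsplitw]; ring
      _ ≤ ν₁ * (x ⬝ᵥ x) + ν₂ * (y ⬝ᵥ y) :=
          add_le_add (mul_le_mul_of_nonneg_right (min_le_left _ _) hxx0)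
            (mul_le_mul_of_nonneg_right (min_le_right _ _) hyy0)
      _ ≤ x ⬝ᵥ (Q₁ *ᵥ x) + y ⬝ᵥ (Q₂ *ᵥ y) := add_le_add hxQ hyQ
      _ ≤ w ⬝ᵥ (Q *ᵥ w) := by rw [hexp]; linarith
      _ ≤ μ * (w ⬝ᵥ w) := hupper
  exact le_of_mul_le_mul_right hchain hwpos
end

section
/- In the k-to-k setup with n ≥ 2, if 2kp ≤ min(λ₂(Q₁), λ₂(Q₂)), then every vector x = (x₁, x₂) ∈ ℝ^{2n} orthogonal to (u, u) satisfies xᵀ Q x ≥ 2kp · xᵀx, and consequently the second-smallest eigenvalue of the supra-Laplacian equals λ₂(Q) = 2kp; in other words, below the coupling value p = min(λ₂(Q₁), λ₂(Q₂))/(2k) the eigenvalue 2kp is the algebraic connectivity of Q (lower bound for the structural transition threshold). -/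
open Matrix

section Helpers

-- list lemmas

lemma lst_countP_lt_le_one (l : List ℝ) (hs : l.Pairwise (· ≤ ·)) (h2 : 2 ≤ l.length)
    (c : ℝ) (hc : c ≤ l[1]!) : l.countP (fun x => decide (x < c)) ≤ 1 := by
  match l, h2 with
  | a :: b :: t, _ =>
    have hb : b = (a :: b :: t)[1]! := by simp
    have hbt : ∀ x ∈ t, b ≤ x := (List.pairwise_cons.1 (List.pairwise_cons.1 hs).2).1
    have ht : t.countP (fun x => decide (x < c)) = 0 := by
      rw [List.countP_eq_zero]
      intro x hx
      simpa using not_lt.2 (le_trans (hb ▸ hc) (hbt x hx))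
    have hbge : ¬ (b < c) := not_lt.2 (hb ▸ hc)
    simp only [List.countP_cons, ht, hbge, decide_eq_true_eq]
    have : (if decide (a < c) = true then 1 else 0) ≤ 1 := by split <;> omega
    simpa using this

lemma lst_le_get1 (l : List ℝ) (hs : l.Pairwise (· ≤ ·)) (h2 : 2 ≤ l.length)
    (c : ℝ) (h : l.countP (fun x => decide (x < c)) ≤ 1) : c ≤ l[1]! := by
  match l, h2 with
  | a :: b :: t, _ =>
    by_contra hbc
    push_neg at hbc
    simp only [List.getElem!_cons_succ, List.getElem!_cons_zero] at hbc
    have hab : a ≤ b := (List.pairwise_cons.1 hs).1 b (by simp)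
    simp only [List.countP_cons, decide_eq_true (show b < c from hbc),
      decide_eq_true (show a < c from lt_of_le_of_lt hab hbc)] at h
    simp at h

lemma lst_get1_le (l : List ℝ) (hs : l.Pairwise (· ≤ ·)) (h2 : 2 ≤ l.length)
    (c : ℝ) (h : 2 ≤ l.countP (fun x => decide (x ≤ c))) : l[1]! ≤ c := by
  match l, h2 with
  | a :: b :: t, _ =>
    by_contra hbc
    push_neg at hbc
    simp only [List.getElem!_cons_succ, List.getElem!_cons_zero] at hbc
    have hbt : ∀ x ∈ t, b ≤ x := (List.pairwise_cons.1 (List.pairwise_cons.1 hs).2).1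
    have ht : t.countP (fun x => decide (x ≤ c)) = 0 := by
      rw [List.countP_eq_zero]
      intro x hx
      simpa using not_le.2 (lt_of_lt_of_le hbc (hbt x hx))
    rcases Decidable.em (a ≤ c) with hac | hac <;>
      simp [List.countP_cons, ht, not_le.2 hbc, hac] at h

variable {ι : Type*} [Fintype ι] [DecidableEq ι] {A : Matrix ι ι ℝ} (hA : A.IsHermitian)

lemma sortedEigs_length : (sortedEigs hA).length = Fintype.card ι := by
  simp [sortedEigs, Multiset.length_sort]

lemma sortedEigs_sorted : (sortedEigs hA).Pairwise (· ≤ ·) :=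
  Multiset.pairwise_sort _ _

lemma sortedEigs_countP (p : ℝ → Prop) [DecidablePred p] :
    (sortedEigs hA).countP (fun x => decide (p x)) =
      (Finset.univ.filter (fun i => p (hA.eigenvalues i))).card := by
  have h1 : ((sortedEigs hA : List ℝ) : Multiset ℝ) = Finset.univ.val.map hA.eigenvalues :=
    Multiset.sort_eq _ _
  have h2 : Multiset.countP (fun x => p x) ((sortedEigs hA : List ℝ) : Multiset ℝ)
      = (sortedEigs hA).countP (fun x => decide (p x)) := Multiset.coe_countP _ _
  rw [← h2, h1, Multiset.countP_map]
  rfl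

lemma eig_dot (i j : ι) :
    (⇑(hA.eigenvectorBasis i) : ι → ℝ) ⬝ᵥ ⇑(hA.eigenvectorBasis j) = if i = j then 1 else 0 := by
  have h := (orthonormal_iff_ite.1 hA.eigenvectorBasis.orthonormal) i j
  simpa [PiLp.inner_apply, RCLike.inner_apply, dotProduct, mul_comm] using h

lemma eig_expand (w : ι → ℝ) :
    w = ∑ i, ((⇑(hA.eigenvectorBasis i) : ι → ℝ) ⬝ᵥ w) • ⇑(hA.eigenvectorBasis i) := by
  have h := hA.eigenvectorBasis.sum_repr' (WithLp.toLp 2 w : EuclideanSpace ℝ ι)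
  have h2 : ∀ i, (inner ℝ (hA.eigenvectorBasis i) (WithLp.toLp 2 w : EuclideanSpace ℝ ι) : ℝ)
      = (⇑(hA.eigenvectorBasis i) : ι → ℝ) ⬝ᵥ w := by
    intro i; simp [PiLp.inner_apply, RCLike.inner_apply, dotProduct, mul_comm]
  have h3 := congrArg WithLp.ofLp h
  rw [WithLp.ofLp_sum] at h3
  simp only [WithLp.ofLp_smul, h2] at h3
  exact h3.symm

lemma eig_coord_mulVec (v : ι → ℝ) (i : ι) :
    (⇑(hA.eigenvectorBasis i) : ι → ℝ) ⬝ᵥ (A *ᵥ v)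
      = hA.eigenvalues i * ((⇑(hA.eigenvectorBasis i) : ι → ℝ) ⬝ᵥ v) := by
  have hAT : Aᵀ = A := by
    have := hA.eq
    rwa [show Aᴴ = Aᵀ from Matrix.ext fun i j => star_trivial _] at this
  rw [Matrix.dotProduct_mulVec, ← Matrix.mulVec_transpose, hAT,
    hA.mulVec_eigenvectorBasis, smul_dotProduct]
  rfl

lemma eig_parseval (w v : ι → ℝ) :
    w ⬝ᵥ v = ∑ i, ((⇑(hA.eigenvectorBasis i) : ι → ℝ) ⬝ᵥ w)
      * ((⇑(hA.eigenvectorBasis i) : ι → ℝ) ⬝ᵥ v) := by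
  conv_lhs => rw [eig_expand hA v]
  rw [dotProduct]
  simp only [Finset.sum_apply, Pi.smul_apply, smul_eq_mul, Finset.mul_sum]
  rw [Finset.sum_comm]
  refine Finset.sum_congr rfl fun i _ => ?_
  rw [dotProduct, dotProduct, Finset.sum_mul]
  refine Finset.sum_congr rfl fun j _ => ?_
  ring

lemma eig_quad (w : ι → ℝ) :
    w ⬝ᵥ (A *ᵥ w) = ∑ i, hA.eigenvalues i * ((⇑(hA.eigenvectorBasis i) : ι → ℝ) ⬝ᵥ w)^2 := by
  rw [eig_parseval hA w (A *ᵥ w)]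
  refine Finset.sum_congr rfl fun i _ => ?_
  rw [eig_coord_mulVec hA w i]
  ring

lemma eig_norm (w : ι → ℝ) :
    w ⬝ᵥ w = ∑ i, ((⇑(hA.eigenvectorBasis i) : ι → ℝ) ⬝ᵥ w)^2 := by
  rw [eig_parseval hA w w]
  refine Finset.sum_congr rfl fun i _ => ?_
  ring

lemma eig_coord_eigvec {v : ι → ℝ} {c : ℝ} (hv : A *ᵥ v = c • v) (i : ι) :
    (hA.eigenvalues i - c) * ((⇑(hA.eigenvectorBasis i) : ι → ℝ) ⬝ᵥ v) = 0 := by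
  have h := eig_coord_mulVec hA v i
  rw [hv] at h
  have h2 : (⇑(hA.eigenvectorBasis i) : ι → ℝ) ⬝ᵥ (c • v)
      = c * ((⇑(hA.eigenvectorBasis i) : ι → ℝ) ⬝ᵥ v) := by
    rw [dotProduct_smul]; rfl
  rw [h2] at h
  nlinarith [h]

lemma eig_nonzero_coord {v : ι → ℝ} (hv : v ≠ 0) :
    ∃ i, (⇑(hA.eigenvectorBasis i) : ι → ℝ) ⬝ᵥ v ≠ 0 := by
  by_contra h
  push_neg at h
  apply hv
  rw [eig_expand hA v]
  refine Finset.sum_eq_zero fun i _ => ?_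
  rw [h i, zero_smul]

lemma rayleigh_perp {A : Matrix ι ι ℝ} (hA : A.IsHermitian) (hPSD : A.PosSemidef)
    (h2 : 2 ≤ Fintype.card ι) {v : ι → ℝ} (hv : v ≠ 0) (hAv : A *ᵥ v = 0)
    {w : ι → ℝ} (hw : w ⬝ᵥ v = 0) :
    (sortedEigs hA)[1]! * (w ⬝ᵥ w) ≤ w ⬝ᵥ (A *ᵥ w) := by
  set lam := (sortedEigs hA)[1]! with hlam
  have hlen : 2 ≤ (sortedEigs hA).length := by rw [sortedEigs_length hA]; exact h2
  -- at most one eigenvalue < lam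
  have hcount : ((Finset.univ.filter (fun i => hA.eigenvalues i < lam)).card : ℕ) ≤ 1 := by
    rw [← sortedEigs_countP hA (fun x => x < lam)]
    exact lst_countP_lt_le_one _ (sortedEigs_sorted hA) hlen lam le_rfl
  -- key: for any i with eigenvalue < lam, the coordinate of w vanishes
  have hkey : ∀ i, hA.eigenvalues i < lam → (⇑(hA.eigenvectorBasis i) : ι → ℝ) ⬝ᵥ w = 0 := by
    intro i₀ hi₀
    -- v's coordinates vanish away from i₀
    have hvco : ∀ j, j ≠ i₀ → (⇑(hA.eigenvectorBasis j) : ι → ℝ) ⬝ᵥ v = 0 := by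
      intro j hj
      have hjlam : ¬ (hA.eigenvalues j < lam) := by
        intro hjl
        have : ({i₀, j} : Finset ι) ⊆ Finset.univ.filter (fun i => hA.eigenvalues i < lam) := by
          intro a ha
          simp only [Finset.mem_insert, Finset.mem_singleton] at ha
          rcases ha with rfl | rfl <;> simp [hi₀, hjl]
        have hc2 : ({i₀, j} : Finset ι).card = 2 := Finset.card_pair (Ne.symm hj)
        have := Finset.card_le_card this
        omega
      have hμj : hA.eigenvalues j ≠ 0 := by
        have h0 : 0 ≤ hA.eigenvalues i₀ := hPSD.eigenvalues_nonneg i₀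
        have : lam ≤ hA.eigenvalues j := not_lt.1 hjlam
        intro hz
        rw [hz] at this
        linarith
      have h := eig_coord_eigvec hA (show A *ᵥ v = (0:ℝ) • v by rw [hAv, zero_smul]) j
      rw [sub_zero] at h
      exact (mul_eq_zero.1 h).resolve_left hμj
    -- v = c • g i₀ with c ≠ 0
    have hvi₀ : (⇑(hA.eigenvectorBasis i₀) : ι → ℝ) ⬝ᵥ v ≠ 0 := by
      obtain ⟨j, hj⟩ := eig_nonzero_coord hA hv
      by_cases hji : j = i₀
      · rwa [hji] at hj
      · exact absurd (hvco j hji) hj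
    have hp := eig_parseval hA w v
    rw [hw] at hp
    have hsum : ∑ i, ((⇑(hA.eigenvectorBasis i) : ι → ℝ) ⬝ᵥ w)
          * ((⇑(hA.eigenvectorBasis i) : ι → ℝ) ⬝ᵥ v)
        = ((⇑(hA.eigenvectorBasis i₀) : ι → ℝ) ⬝ᵥ w)
          * ((⇑(hA.eigenvectorBasis i₀) : ι → ℝ) ⬝ᵥ v) :=
      Finset.sum_eq_single i₀ (fun j _ hj => by rw [hvco j hj, mul_zero])
        (fun h => absurd (Finset.mem_univ i₀) h)
    rw [hsum] at hp
    rcases mul_eq_zero.1 hp.symm with h | h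
    · exact h
    · exact absurd h hvi₀
  rw [eig_quad hA w, eig_norm hA w, Finset.mul_sum]
  refine Finset.sum_le_sum fun i _ => ?_
  by_cases hi : hA.eigenvalues i < lam
  · rw [hkey i hi]; simp
  · have := not_lt.1 hi
    nlinarith [sq_nonneg ((⇑(hA.eigenvectorBasis i) : ι → ℝ) ⬝ᵥ w)]

lemma dot_comb (α β : ℝ) (a b u : ι → ℝ) :
    (fun t => α * a t + β * b t) ⬝ᵥ u = α * (a ⬝ᵥ u) + β * (b ⬝ᵥ u) := by
  simp [dotProduct, Finset.mul_sum, add_mul, mul_assoc, Finset.sum_add_distrib]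

lemma dot_comb' (α β : ℝ) (a b u : ι → ℝ) :
    u ⬝ᵥ (fun t => α * a t + β * b t) = α * (u ⬝ᵥ a) + β * (u ⬝ᵥ b) := by
  rw [dotProduct_comm, dot_comb, dotProduct_comm a u, dotProduct_comm b u]

lemma second_eig_eq {A : Matrix ι ι ℝ} (hA : A.IsHermitian) (h2 : 2 ≤ Fintype.card ι)
    {v w₀ : ι → ℝ} (hv : v ≠ 0) (hw₀ : w₀ ≠ 0) (hAv : A *ᵥ v = 0)
    (hvw : w₀ ⬝ᵥ v = 0) {c : ℝ} (hc : 0 ≤ c) (hAw : A *ᵥ w₀ = c • w₀)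
    (hbound : ∀ w : ι → ℝ, w ⬝ᵥ v = 0 → c * (w ⬝ᵥ w) ≤ w ⬝ᵥ (A *ᵥ w)) :
    (sortedEigs hA)[1]! = c := by
  have hlen : 2 ≤ (sortedEigs hA).length := by rw [sortedEigs_length hA]; exact h2
  have hAv' : A *ᵥ v = (0:ℝ) • v := by rw [hAv, zero_smul]
  -- upper bound : at least two eigenvalues ≤ c
  have hub : (sortedEigs hA)[1]! ≤ c := by
    apply lst_get1_le _ (sortedEigs_sorted hA) hlen
    rw [sortedEigs_countP hA (fun x => x ≤ c)]
    by_contra hcard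
    push_neg at hcard
    have hcard1 : (Finset.univ.filter (fun i => hA.eigenvalues i ≤ c)).card ≤ 1 := by omega
    have hvanish : ∀ (u : ι → ℝ) (d : ℝ), A *ᵥ u = d • u → d ≤ c → ∀ i,
        ¬ (hA.eigenvalues i ≤ c) → (⇑(hA.eigenvectorBasis i) : ι → ℝ) ⬝ᵥ u = 0 := by
      intro u d hu hd i hi
      push_neg at hi
      have h := eig_coord_eigvec hA hu i
      have : hA.eigenvalues i - d ≠ 0 := by intro h0; nlinarith
      exact (mul_eq_zero.1 h).resolve_left this
    obtain ⟨i₀, hi₀⟩ := eig_nonzero_coord hA hv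
    obtain ⟨i₁, hi₁⟩ := eig_nonzero_coord hA hw₀
    have hi₀S : i₀ ∈ Finset.univ.filter (fun i => hA.eigenvalues i ≤ c) := by
      simp only [Finset.mem_filter, Finset.mem_univ, true_and]
      by_contra h
      exact hi₀ (hvanish v 0 hAv' hc i₀ h)
    have hi₁S : i₁ ∈ Finset.univ.filter (fun i => hA.eigenvalues i ≤ c) := by
      simp only [Finset.mem_filter, Finset.mem_univ, true_and]
      by_contra h
      exact hi₁ (hvanish w₀ c hAw le_rfl i₁ h)
    have heq : i₁ = i₀ := Finset.card_le_one.1 hcard1 _ hi₁S _ hi₀S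
    subst heq
    have hp := eig_parseval hA w₀ v
    rw [hvw] at hp
    have hsum : ∑ i, ((⇑(hA.eigenvectorBasis i) : ι → ℝ) ⬝ᵥ w₀)
          * ((⇑(hA.eigenvectorBasis i) : ι → ℝ) ⬝ᵥ v)
        = ((⇑(hA.eigenvectorBasis i₁) : ι → ℝ) ⬝ᵥ w₀)
          * ((⇑(hA.eigenvectorBasis i₁) : ι → ℝ) ⬝ᵥ v) := by
      refine Finset.sum_eq_single i₁ (fun j _ hj => ?_) (fun h => absurd (Finset.mem_univ i₁) h)
      by_cases hjw : (⇑(hA.eigenvectorBasis j) : ι → ℝ) ⬝ᵥ w₀ = 0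
      · rw [hjw, zero_mul]
      · exfalso
        apply hj
        apply Finset.card_le_one.1 hcard1 _ _ _ hi₁S
        simp only [Finset.mem_filter, Finset.mem_univ, true_and]
        by_contra h
        exact hjw (hvanish w₀ c hAw le_rfl j h)
    rw [hsum] at hp
    rcases mul_eq_zero.1 hp.symm with h | h
    · exact hi₁ h
    · exact hi₀ h
  -- lower bound : at most one eigenvalue < c
  have hlb : c ≤ (sortedEigs hA)[1]! := by
    apply lst_le_get1 _ (sortedEigs_sorted hA) hlen
    rw [sortedEigs_countP hA (fun x => x < c)]
    by_contra hcard
    push_neg at hcard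
    obtain ⟨i, hiS, j, hjS, hij⟩ := Finset.one_lt_card.1 hcard
    simp only [Finset.mem_filter, Finset.mem_univ, true_and] at hiS hjS
    set gi := (⇑(hA.eigenvectorBasis i) : ι → ℝ) with hgi
    set gj := (⇑(hA.eigenvectorBasis j) : ι → ℝ) with hgj
    have key : ∀ α β : ℝ, α * (gi ⬝ᵥ v) + β * (gj ⬝ᵥ v) = 0 → 0 < α^2 + β^2 → False := by
      intro α β hperp hpos
      set w : ι → ℝ := fun t => α * gi t + β * gj t with hwdef
      have hwv : w ⬝ᵥ v = 0 := by rw [hwdef, dot_comb]; exact hperp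
      have hgii : gi ⬝ᵥ gi = 1 := by rw [hgi, eig_dot hA]; simp
      have hgij : gi ⬝ᵥ gj = 0 := by rw [hgi, hgj, eig_dot hA]; simp [hij]
      have hgji : gj ⬝ᵥ gi = 0 := by rw [hgi, hgj, eig_dot hA]; simp [Ne.symm hij]
      have hgjj : gj ⬝ᵥ gj = 1 := by rw [hgj, eig_dot hA]; simp
      have hww : w ⬝ᵥ w = α^2 + β^2 := by
        rw [hwdef, dot_comb, dot_comb', dot_comb', hgii, hgij, hgji, hgjj]
        ring
      have hAw' : A *ᵥ w = fun t => (α * hA.eigenvalues i) * gi t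
          + (β * hA.eigenvalues j) * gj t := by
        funext s
        have h1 : A *ᵥ w = α • (A *ᵥ gi) + β • (A *ᵥ gj) := by
          have : w = α • gi + β • gj := by funext t; simp [hwdef]
          rw [this, Matrix.mulVec_add, Matrix.mulVec_smul, Matrix.mulVec_smul]
        rw [h1, hgi, hgj, hA.mulVec_eigenvectorBasis, hA.mulVec_eigenvectorBasis]
        simp [mul_comm, mul_assoc, mul_left_comm]
      have hwAw : w ⬝ᵥ (A *ᵥ w) = α^2 * hA.eigenvalues i + β^2 * hA.eigenvalues j := by
        rw [hAw', dot_comb', dot_comb, dot_comb, hgii, hgij, hgji, hgjj]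
        ring
      have hb := hbound w hwv
      rw [hww, hwAw] at hb
      have hs : 0 < c - hA.eigenvalues i := sub_pos.2 hiS
      have ht : 0 < c - hA.eigenvalues j := sub_pos.2 hjS
      have h1 : (c - hA.eigenvalues i) * α^2 + (c - hA.eigenvalues j) * β^2 ≤ 0 := by
        nlinarith [hb]
      have hα2 : α^2 ≤ 0 := by
        nlinarith [hs, h1, mul_nonneg ht.le (sq_nonneg β)]
      have hβ2 : β^2 ≤ 0 := by
        nlinarith [ht, h1, mul_nonneg hs.le (sq_nonneg α)]
      linarith [hpos]
    by_cases hcvi : gi ⬝ᵥ v = 0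
    · exact key 1 0 (by rw [hcvi]; ring) (by norm_num)
    · by_cases hcvj : gj ⬝ᵥ v = 0
      · exact key 0 1 (by rw [hcvj]; ring) (by norm_num)
      · exact key (gj ⬝ᵥ v) (-(gi ⬝ᵥ v)) (by ring) (by positivity)
  linarith

end Helpers

set_option maxHeartbeats 1000000 in
/-- In the k-to-k setup with `n ≥ 2`, if `2kp ≤ min(λ₂(Q₁), λ₂(Q₂))`, then
every vector `x` orthogonal to `(u, u)` satisfies `xᵀ Q x ≥ 2kp·xᵀx`, and consequently
`λ₂(Q) = 2kp`: below `p = min(λ₂(Q₁), λ₂(Q₂))/(2k)` the eigenvalue `2kp` is the algebraic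
connectivity of `Q`. -/
theorem stmt_9
    (n k : ℕ) (p : ℝ) (hn : 2 ≤ n) (hk : 1 ≤ k) (hkn : k ≤ n) (hp : 0 ≤ p)
    (Q₁ Q₂ B : Matrix (Fin n) (Fin n) ℝ)
    (hQ₁ : Q₁.PosSemidef) (hQ₂ : Q₂.PosSemidef)
    (hQ₁u : Q₁ *ᵥ (fun _ => (1:ℝ)) = 0) (hQ₂u : Q₂ *ᵥ (fun _ => (1:ℝ)) = 0)
    (hB0 : ∀ i j, 0 ≤ B i j)
    (hBrow : ∀ i, ∑ j, B i j = (k:ℝ) * p) (hBcol : ∀ j, ∑ i, B i j = (k:ℝ) * p)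
    (Q : Matrix (Fin n ⊕ Fin n) (Fin n ⊕ Fin n) ℝ)
    (hQdef : Q = Matrix.fromBlocks (Q₁ + ((k:ℝ) * p) • 1) (-B)
      (-Bᵀ) (Q₂ + ((k:ℝ) * p) • 1))
    (hQH : Q.IsHermitian)
    (hle : 2 * (k:ℝ) * p ≤
      min ((sortedEigs hQ₁.isHermitian)[1]!) ((sortedEigs hQ₂.isHermitian)[1]!)) :
    (∀ x : Fin n ⊕ Fin n → ℝ,
        x ⬝ᵥ (Sum.elim (fun _ => (1:ℝ)) (fun _ => (1:ℝ))) = 0 →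
        2 * (k:ℝ) * p * (x ⬝ᵥ x) ≤ x ⬝ᵥ (Q *ᵥ x)) ∧
      (sortedEigs hQH)[1]! = 2 * (k:ℝ) * p := by
  have hK0 : 0 ≤ (k:ℝ) * p := mul_nonneg (Nat.cast_nonneg k) hp
  set K : ℝ := (k:ℝ) * p with hK
  have hnR : (0:ℝ) < (n:ℝ) := by
    have : 0 < n := by omega
    exact_mod_cast this
  set u : Fin n → ℝ := fun _ => (1:ℝ) with hu
  have hune : u ≠ 0 := by
    intro h
    have := congrFun h ⟨0, by omega⟩
    norm_num [hu] at this
  have hdotu : ∀ z : Fin n → ℝ, z ⬝ᵥ u = ∑ i, z i := by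
    intro z; simp [hu, dotProduct]
  have hudot : ∀ z : Fin n → ℝ, u ⬝ᵥ z = ∑ i, z i := by
    intro z; simp [hu, dotProduct]
  have huu : u ⬝ᵥ u = (n:ℝ) := by simp [hu, dotProduct]
  have hBu : B *ᵥ u = K • u := by
    funext i
    simp [Matrix.mulVec, dotProduct, hu, hBrow i, hK]
  have huB : u ᵥ* B = K • u := by
    funext j
    simp [Matrix.vecMul, dotProduct, hu, hBcol j, hK]
  have hBTu : Bᵀ *ᵥ u = K • u := by rw [Matrix.mulVec_transpose, huB]
  have hQ₁T : Q₁ᵀ = Q₁ := by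
    have := hQ₁.isHermitian.eq
    rwa [show Q₁ᴴ = Q₁ᵀ from Matrix.ext fun i j => star_trivial _] at this
  have hQ₂T : Q₂ᵀ = Q₂ := by
    have := hQ₂.isHermitian.eq
    rwa [show Q₂ᴴ = Q₂ᵀ from Matrix.ext fun i j => star_trivial _] at this
  have hcardn : 2 ≤ Fintype.card (Fin n) := by simpa using hn
  clear_value K u
  -- PART 1
  have part1 : ∀ x : Fin n ⊕ Fin n → ℝ,
      x ⬝ᵥ (Sum.elim (fun _ => (1:ℝ)) (fun _ => (1:ℝ))) = 0 →
      2 * (k:ℝ) * p * (x ⬝ᵥ x) ≤ x ⬝ᵥ (Q *ᵥ x) := by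
    intro x hxc0
    have hxc : x ⬝ᵥ Sum.elim u u = 0 := by rw [hu]; exact hxc0
    clear hxc0
    set x₁ : Fin n → ℝ := fun i => x (Sum.inl i) with hx₁
    set x₂ : Fin n → ℝ := fun i => x (Sum.inr i) with hx₂
    have hxelim : x = Sum.elim x₁ x₂ := by funext t; cases t <;> rfl
    have hsum : (∑ i, x₁ i) + (∑ i, x₂ i) = 0 := by
      rw [hxelim] at hxc
      rw [sumElim_dotProduct_sumElim] at hxc
      rw [hdotu x₁, hdotu x₂] at hxc
      exact hxc
    set a : ℝ := (∑ i, x₁ i) / n with ha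
    set y₁ : Fin n → ℝ := fun i => x₁ i - a with hy₁
    set y₂ : Fin n → ℝ := fun i => x₂ i + a with hy₂
    clear_value x₁ x₂ a y₁ y₂
    have hs1 : ∑ i, y₁ i = 0 := by
      simp only [hy₁, Finset.sum_sub_distrib, Finset.sum_const, Finset.card_univ,
        Fintype.card_fin, nsmul_eq_mul, ha]
      field_simp
      simp
    have hs2 : ∑ i, y₂ i = 0 := by
      simp only [hy₂, Finset.sum_add_distrib, Finset.sum_const, Finset.card_univ,
        Fintype.card_fin, nsmul_eq_mul, ha]
      field_simp
      linarith [hsum]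
    have hx1e : x₁ = fun i => 1 * y₁ i + a * u i := by
      funext i; simp [hy₁, hu]
    have hx2e : x₂ = fun i => 1 * y₂ i + (-a) * u i := by
      funext i; simp only [hy₂, hu]; ring
    -- (a) quadratic forms
    have hm1 : Q₁ *ᵥ x₁ = Q₁ *ᵥ y₁ := by
      have hxx : x₁ = y₁ + a • u := by funext i; simp [hy₁, hu]
      rw [hxx, Matrix.mulVec_add, Matrix.mulVec_smul, hQ₁u, smul_zero, add_zero]
    have hm2 : Q₂ *ᵥ x₂ = Q₂ *ᵥ y₂ := by
      have hxx : x₂ = y₂ + (-a) • u := by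
        funext i; simp only [hy₂, hu, Pi.add_apply, Pi.smul_apply, smul_eq_mul]; ring
      rw [hxx, Matrix.mulVec_add, Matrix.mulVec_smul, hQ₂u, smul_zero, add_zero]
    have hu0 : ∀ z : Fin n → ℝ, u ⬝ᵥ (Q₁ *ᵥ z) = 0 := by
      intro z
      rw [Matrix.dotProduct_mulVec]
      have hz : u ᵥ* Q₁ = 0 := by rw [← Matrix.mulVec_transpose, hQ₁T, hQ₁u]
      rw [hz, zero_dotProduct]
    have hu0' : ∀ z : Fin n → ℝ, u ⬝ᵥ (Q₂ *ᵥ z) = 0 := by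
      intro z
      rw [Matrix.dotProduct_mulVec]
      have hz : u ᵥ* Q₂ = 0 := by rw [← Matrix.mulVec_transpose, hQ₂T, hQ₂u]
      rw [hz, zero_dotProduct]
    have hQ1x : x₁ ⬝ᵥ (Q₁ *ᵥ x₁) = y₁ ⬝ᵥ (Q₁ *ᵥ y₁) := by
      rw [hm1, hx1e, dot_comb 1 a y₁ u (Q₁ *ᵥ y₁), hu0 y₁]
      ring
    have hQ2x : x₂ ⬝ᵥ (Q₂ *ᵥ x₂) = y₂ ⬝ᵥ (Q₂ *ᵥ y₂) := by
      rw [hm2, hx2e, dot_comb 1 (-a) y₂ u (Q₂ *ᵥ y₂), hu0' y₂]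
      ring
    -- (b) rayleigh bounds
    have hy1u : y₁ ⬝ᵥ u = 0 := by rw [hdotu, hs1]
    have hy2u : y₂ ⬝ᵥ u = 0 := by rw [hdotu, hs2]
    have hray1 : 2 * K * (y₁ ⬝ᵥ y₁) ≤ y₁ ⬝ᵥ (Q₁ *ᵥ y₁) := by
      have h := rayleigh_perp hQ₁.isHermitian hQ₁ hcardn hune hQ₁u hy1u
      have h2 : 2 * K ≤ (sortedEigs hQ₁.isHermitian)[1]! := by
        have h3 := le_trans hle (min_le_left _ _)
        rw [hK]; linarith [h3]
      have hnn : 0 ≤ y₁ ⬝ᵥ y₁ := Finset.sum_nonneg fun i _ => mul_self_nonneg _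
      calc 2 * K * (y₁ ⬝ᵥ y₁) ≤ (sortedEigs hQ₁.isHermitian)[1]! * (y₁ ⬝ᵥ y₁) :=
             mul_le_mul_of_nonneg_right h2 hnn
        _ ≤ y₁ ⬝ᵥ (Q₁ *ᵥ y₁) := h
    have hray2 : 2 * K * (y₂ ⬝ᵥ y₂) ≤ y₂ ⬝ᵥ (Q₂ *ᵥ y₂) := by
      have h := rayleigh_perp hQ₂.isHermitian hQ₂ hcardn hune hQ₂u hy2u
      have h2 : 2 * K ≤ (sortedEigs hQ₂.isHermitian)[1]! := by
        have h3 := le_trans hle (min_le_right _ _)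
        rw [hK]; linarith [h3]
      have hnn : 0 ≤ y₂ ⬝ᵥ y₂ := Finset.sum_nonneg fun i _ => mul_self_nonneg _
      calc 2 * K * (y₂ ⬝ᵥ y₂) ≤ (sortedEigs hQ₂.isHermitian)[1]! * (y₂ ⬝ᵥ y₂) :=
             mul_le_mul_of_nonneg_right h2 hnn
        _ ≤ y₂ ⬝ᵥ (Q₂ *ᵥ y₂) := h
    -- (c) cross term
    have huBy2 : u ⬝ᵥ (B *ᵥ y₂) = 0 := by
      rw [Matrix.dotProduct_mulVec, huB, smul_dotProduct, hudot, hs2]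
      simp
    have hcross : x₁ ⬝ᵥ (B *ᵥ x₂) = y₁ ⬝ᵥ (B *ᵥ y₂) - a^2 * (n:ℝ) * K := by
      have hmB : B *ᵥ x₂ = fun i => 1 * (B *ᵥ y₂) i + (-(a*K)) * u i := by
        have hxx : x₂ = y₂ + (-a) • u := by
          funext i; simp only [hy₂, hu, Pi.add_apply, Pi.smul_apply, smul_eq_mul]; ring
        rw [hxx, Matrix.mulVec_add, Matrix.mulVec_smul, hBu]
        funext i
        simp only [Pi.add_apply, Pi.smul_apply, smul_eq_mul]
        ring
      rw [hmB, hx1e, dot_comb 1 a, dot_comb' 1 (-(a*K)), dot_comb' 1 (-(a*K)),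
        hy1u, huu]
      have h2 : u ⬝ᵥ (B *ᵥ y₂) = 0 := huBy2
      rw [h2]
      ring
    -- (d) B bound
    have hy1sq : y₁ ⬝ᵥ y₁ = ∑ i, (y₁ i)^2 := by
      simp [dotProduct, pow_two]
    have hy2sq : y₂ ⬝ᵥ y₂ = ∑ i, (y₂ i)^2 := by
      simp [dotProduct, pow_two]
    have hdB : y₁ ⬝ᵥ (B *ᵥ y₂) ≤ K / 2 * (y₁ ⬝ᵥ y₁ + y₂ ⬝ᵥ y₂) := by
      have hexp : y₁ ⬝ᵥ (B *ᵥ y₂) = ∑ i, ∑ j, B i j * (y₁ i * y₂ j) := by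
        rw [dotProduct]
        refine Finset.sum_congr rfl fun i _ => ?_
        rw [Matrix.mulVec, dotProduct, Finset.mul_sum]
        refine Finset.sum_congr rfl fun j _ => ?_
        ring
      have hstep : y₁ ⬝ᵥ (B *ᵥ y₂) ≤ ∑ i, ∑ j,
          (B i j * (y₁ i)^2 / 2 + B i j * (y₂ j)^2 / 2) := by
        rw [hexp]
        refine Finset.sum_le_sum fun i _ => Finset.sum_le_sum fun j _ => ?_
        have h1 : y₁ i * y₂ j ≤ ((y₁ i)^2 + (y₂ j)^2) / 2 := by
          have hsq : 0 ≤ (y₁ i - y₂ j)^2 := sq_nonneg _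
          have hring : (y₁ i - y₂ j)^2 = (y₁ i)^2 - 2*(y₁ i * y₂ j) + (y₂ j)^2 := by ring
          rw [hring] at hsq
          linarith
        have h2 := mul_le_mul_of_nonneg_left h1 (hB0 i j)
        linarith
      have hsplit : ∑ i, ∑ j, (B i j * (y₁ i)^2 / 2 + B i j * (y₂ j)^2 / 2)
          = K / 2 * (∑ i, (y₁ i)^2) + K / 2 * (∑ j, (y₂ j)^2) := by
        simp only [Finset.sum_add_distrib]
        congr 1
        · rw [Finset.mul_sum]
          refine Finset.sum_congr rfl fun i _ => ?_
          have : ∑ j, B i j * (y₁ i)^2 / 2 = (∑ j, B i j) * ((y₁ i)^2 / 2) := by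
            rw [Finset.sum_mul]
            exact Finset.sum_congr rfl fun j _ => by ring
          rw [this, hBrow i]
          ring
        · rw [Finset.sum_comm, Finset.mul_sum]
          refine Finset.sum_congr rfl fun j _ => ?_
          have : ∑ i, B i j * (y₂ j)^2 / 2 = (∑ i, B i j) * ((y₂ j)^2 / 2) := by
            rw [Finset.sum_mul]
            exact Finset.sum_congr rfl fun i _ => by ring
          rw [this, hBcol j]
          ring
      rw [hy1sq, hy2sq]
      calc y₁ ⬝ᵥ (B *ᵥ y₂) ≤ _ := hstep
        _ = _ := hsplit
        _ = K / 2 * ((∑ i, (y₁ i)^2) + (∑ j, (y₂ j)^2)) := by ring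
    -- (e) norms
    have huy1 : u ⬝ᵥ y₁ = 0 := by rw [hudot, hs1]
    have huy2 : u ⬝ᵥ y₂ = 0 := by rw [hudot, hs2]
    have hnorm1 : x₁ ⬝ᵥ x₁ = (n:ℝ) * a^2 + y₁ ⬝ᵥ y₁ := by
      rw [hx1e, dot_comb 1 a, dot_comb' 1 a, dot_comb' 1 a, hy1u, huy1, huu]
      ring
    have hnorm2 : x₂ ⬝ᵥ x₂ = (n:ℝ) * a^2 + y₂ ⬝ᵥ y₂ := by
      rw [hx2e, dot_comb 1 (-a), dot_comb' 1 (-a), dot_comb' 1 (-a), hy2u, huy2, huu]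
      ring
    -- (f) expansion of the quadratic form of Q
    have hT : x₂ ⬝ᵥ (Bᵀ *ᵥ x₁) = x₁ ⬝ᵥ (B *ᵥ x₂) := by
      rw [Matrix.mulVec_transpose, dotProduct_comm, ← Matrix.dotProduct_mulVec]
    have hQx : x ⬝ᵥ (Q *ᵥ x) = x₁ ⬝ᵥ (Q₁ *ᵥ x₁) + K * (x₁ ⬝ᵥ x₁)
        + x₂ ⬝ᵥ (Q₂ *ᵥ x₂) + K * (x₂ ⬝ᵥ x₂) - 2 * (x₁ ⬝ᵥ (B *ᵥ x₂)) := by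
      conv_lhs => rw [hxelim, hQdef]
      rw [Matrix.fromBlocks_mulVec, sumElim_dotProduct_sumElim]
      simp only [Sum.elim_comp_inl, Sum.elim_comp_inr, Matrix.add_mulVec, Matrix.neg_mulVec,
        Matrix.smul_mulVec, Matrix.one_mulVec, dotProduct_add,
        dotProduct_neg, dotProduct_smul, smul_eq_mul]
      rw [hT]
      ring
    have hxx : x ⬝ᵥ x = x₁ ⬝ᵥ x₁ + x₂ ⬝ᵥ x₂ := by
      conv_lhs => rw [hxelim]
      rw [sumElim_dotProduct_sumElim]
    rw [hQx, hxx, hQ1x, hQ2x, hcross, hnorm1, hnorm2]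
    have hKe : (k:ℝ) * p = K := hK.symm
    rw [show 2 * (k:ℝ) * p = 2 * K by rw [hK]; ring]
    linarith [hray1, hray2, hdB]
  have part1u : ∀ x : Fin n ⊕ Fin n → ℝ, x ⬝ᵥ (Sum.elim u u) = 0 →
      2 * (k:ℝ) * p * (x ⬝ᵥ x) ≤ x ⬝ᵥ (Q *ᵥ x) := by
    rw [hu]; exact part1
  refine ⟨part1u, ?_⟩
  -- PART 2
  have hcard2 : 2 ≤ Fintype.card (Fin n ⊕ Fin n) := by
    simp only [Fintype.card_sum, Fintype.card_fin]
    omega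
  have hvne : (Sum.elim u u : Fin n ⊕ Fin n → ℝ) ≠ 0 := by
    intro h
    have := congrFun h (Sum.inl ⟨0, by omega⟩)
    norm_num [hu] at this
  have hwne : (Sum.elim u (-u) : Fin n ⊕ Fin n → ℝ) ≠ 0 := by
    intro h
    have := congrFun h (Sum.inl ⟨0, by omega⟩)
    norm_num [hu] at this
  have hQv : Q *ᵥ (Sum.elim u u) = 0 := by
    rw [hQdef, Matrix.fromBlocks_mulVec]
    simp only [Sum.elim_comp_inl, Sum.elim_comp_inr]
    have h1 : (Q₁ + K • 1) *ᵥ u + (-B) *ᵥ u = 0 := by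
      rw [Matrix.add_mulVec, Matrix.smul_mulVec, Matrix.one_mulVec, hQ₁u,
        Matrix.neg_mulVec, hBu]
      simp
    have h2 : (-Bᵀ) *ᵥ u + (Q₂ + K • 1) *ᵥ u = 0 := by
      rw [Matrix.neg_mulVec, hBTu, Matrix.add_mulVec, Matrix.smul_mulVec,
        Matrix.one_mulVec, hQ₂u]
      simp
    rw [h1, h2]
    funext t; cases t <;> simp
  have hwv : (Sum.elim u (-u) : Fin n ⊕ Fin n → ℝ) ⬝ᵥ (Sum.elim u u) = 0 := by
    rw [sumElim_dotProduct_sumElim]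
    simp [hu, dotProduct]
  have hQw : Q *ᵥ (Sum.elim u (-u)) = (2 * (k:ℝ) * p) • (Sum.elim u (-u)) := by
    rw [hQdef, Matrix.fromBlocks_mulVec]
    simp only [Sum.elim_comp_inl, Sum.elim_comp_inr]
    have h1 : (Q₁ + K • 1) *ᵥ u + (-B) *ᵥ (-u) = (2*K) • u := by
      rw [Matrix.add_mulVec, Matrix.smul_mulVec, Matrix.one_mulVec, hQ₁u,
        Matrix.neg_mulVec, Matrix.mulVec_neg, neg_neg, hBu]
      funext i; simp [hu]; ring
    have h2 : (-Bᵀ) *ᵥ u + (Q₂ + K • 1) *ᵥ (-u) = (2*K) • (-u) := by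
      rw [Matrix.neg_mulVec, hBTu, Matrix.add_mulVec, Matrix.mulVec_neg,
        Matrix.smul_mulVec, Matrix.one_mulVec, hQ₂u]
      funext i
      simp only [Pi.add_apply, Pi.neg_apply, Pi.smul_apply, Pi.zero_apply, smul_eq_mul, hu]
      ring
    rw [h1, h2]
    funext t
    cases t <;> simp [hu, hK] <;> try ring
  have h2Kpos : 0 ≤ 2 * (k:ℝ) * p := by positivity
  exact second_eig_eq hQH hcard2 hvne hwne hQv hwv h2Kpos hQw part1u
end

section
/- Let Q₁ and Q₂ be symmetric positive semidefinite n×n real matrices (n ≥ 2) with Q₁u = 0 and Q₂u = 0, let p ≥ 0, and let Q = [[Q₁ + np·I, −pJ], [−pJ, Q₂ + np·I]] be the supra-Laplacian for the n-to-n interconnection B = pJ. Then the second-smallest eigenvalue of Q equals λ₂(Q) = min(2np, np + λ₂(Q₁), np + λ₂(Q₂)). In particular, λ₂(Q) = 2np if and only if np ≤ min(λ₂(Q₁), λ₂(Q₂)), so the structural transition occurs at p* = min(λ₂(Q₁), λ₂(Q₂))/n. -/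
open Matrix
open Polynomial

/-- The `n×n` all-ones matrix `J = u uᵀ`. -/
def allOnes (n : ℕ) : Matrix (Fin n) (Fin n) ℝ := Matrix.of fun _ _ => 1

lemma my_charpoly_conj {ι : Type*} [Fintype ι] [DecidableEq ι]
    (P A : Matrix ι ι ℝ) (h1 : Pᵀ * P = 1) :
    (Pᵀ * A * P).charpoly = A.charpoly := by
  have h2 : P * Pᵀ = 1 := mul_eq_one_comm.mp h1
  set P' : Matrix ι ι ℝ[X] := P.map (C : ℝ →+* ℝ[X]) with hP'
  have hmap : ∀ (M N : Matrix ι ι ℝ), (M * N).map (C : ℝ →+* ℝ[X]) =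
      M.map (C : ℝ →+* ℝ[X]) * N.map (C : ℝ →+* ℝ[X]) := fun M N => Matrix.map_mul
  have htr : (Pᵀ).map (C : ℝ →+* ℝ[X]) = P'ᵀ := by ext i j; simp [hP']
  have hP'1 : P'ᵀ * P' = 1 := by
    rw [← htr, ← hmap, h1]
    ext i j; by_cases h : i = j <;> simp [Matrix.one_apply, h]
  have hP'2 : P' * P'ᵀ = 1 := mul_eq_one_comm.mp hP'1
  have key : charmatrix (Pᵀ * A * P) = P'ᵀ * charmatrix A * P' := by
    unfold charmatrix
    rw [Matrix.mul_sub, Matrix.sub_mul]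
    congr 1
    · rw [Matrix.scalar_apply, ← Matrix.smul_one_eq_diagonal, Matrix.mul_smul,
        Matrix.smul_mul, Matrix.mul_one, hP'1, Matrix.smul_one_eq_diagonal]
    · simp only [RingHom.mapMatrix_apply]
      rw [hmap, hmap, htr, Matrix.mul_assoc]
  rw [Matrix.charpoly, key, Matrix.det_mul, Matrix.det_mul, Matrix.charpoly]
  have h3 : P'ᵀ.det * P'.det = 1 := by rw [mul_comm, ← Matrix.det_mul, hP'2, Matrix.det_one]
  calc P'ᵀ.det * (charmatrix A).det * P'.det
      = (charmatrix A).det * (P'ᵀ.det * P'.det) := by ring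
    _ = (charmatrix A).det := by rw [h3, mul_one]

lemma my_roots_charpoly_diagonal {ι : Type*} [Fintype ι] [DecidableEq ι] (d : ι → ℝ) :
    (Matrix.diagonal d).charpoly.roots = Finset.univ.val.map d := by
  have h1 : charmatrix (Matrix.diagonal d) = Matrix.diagonal (fun i => X - C (d i)) := by
    ext i j; by_cases h : i = j
    · subst h; simp
    · simp [Matrix.charmatrix_apply_ne _ _ _ h, Matrix.diagonal_apply_ne _ h]
  have h2 : (Matrix.diagonal d).charpoly = (Finset.univ.val.map fun i => X - C (d i)).prod := by
    rw [Matrix.charpoly, h1, Matrix.det_diagonal, Finset.prod]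
  rw [h2, show (Multiset.map (fun i => X - C (d i)) Finset.univ.val)
      = ((Finset.univ.val.map d).map fun a => X - C a) by rw [Multiset.map_map]; rfl,
    roots_multiset_prod_X_sub_C]

lemma my_roots_shift {ι : Type*} [Fintype ι] [DecidableEq ι] {A : Matrix ι ι ℝ}
    (hA : A.IsHermitian) (c : ℝ) :
    (A + c • 1).charpoly.roots = (Finset.univ.val.map hA.eigenvalues).map (fun x => x + c) := by
  have hspec := hA.spectral_theorem
  set U : Matrix ι ι ℝ := (hA.eigenvectorUnitary : Matrix ι ι ℝ) with hU
  have hstar : star U = Uᵀ := by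
    rw [Matrix.star_eq_conjTranspose, Matrix.conjTranspose_eq_transpose_of_trivial]
  have hU1 : U * Uᵀ = 1 := by
    rw [← hstar]; exact (Matrix.mem_unitaryGroup_iff).mp hA.eigenvectorUnitary.2
  have hofReal : (RCLike.ofReal ∘ hA.eigenvalues : ι → ℝ) = hA.eigenvalues := by
    funext i; simp [RCLike.ofReal_real_eq_id]
  have key : A + c • 1 = U * Matrix.diagonal (fun i => hA.eigenvalues i + c) * Uᵀ := by
    have h2 : U * Matrix.diagonal (fun _ : ι => c) * Uᵀ = c • 1 := by
      rw [← Matrix.smul_one_eq_diagonal, Matrix.mul_smul, Matrix.smul_mul, Matrix.mul_one, hU1]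
    conv_lhs => rw [hspec, Unitary.conjStarAlgAut_apply, hstar, hofReal, ← h2]
    rw [← Matrix.add_mul, ← Matrix.mul_add, Matrix.diagonal_add]
  have hcp : (A + c • 1).charpoly
      = (Matrix.diagonal (fun i => hA.eigenvalues i + c)).charpoly := by
    have h3 := my_charpoly_conj Uᵀ (Matrix.diagonal (fun i => hA.eigenvalues i + c))
      (by rw [Matrix.transpose_transpose, hU1])
    rw [Matrix.transpose_transpose] at h3
    rw [key, ← h3]
  rw [hcp, my_roots_charpoly_diagonal, Multiset.map_map]; rfl

lemma my_roots_eigs {ι : Type*} [Fintype ι] [DecidableEq ι] {A : Matrix ι ι ℝ}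
    (hA : A.IsHermitian) :
    A.charpoly.roots = Finset.univ.val.map hA.eigenvalues := by
  have h := my_roots_shift hA 0
  rw [zero_smul, add_zero] at h
  rw [h, show (fun x : ℝ => x + 0) = id from funext fun x => add_zero x, Multiset.map_id]

lemma my_sort_second (s : Multiset ℝ) (hs : s ≠ 0) (h0 : ∀ x ∈ s, (0:ℝ) ≤ x) :
    (Multiset.sort ((0:ℝ) ::ₘ s) (· ≤ ·))[1]! ∈ s ∧
      ∀ x ∈ s, (Multiset.sort ((0:ℝ) ::ₘ s) (· ≤ ·))[1]! ≤ x := by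
  rw [Multiset.sort_cons 0 s (· ≤ ·) h0]
  obtain ⟨a, t, ht⟩ : ∃ a t, Multiset.sort s (· ≤ ·) = a :: t := by
    rcases h : Multiset.sort s (· ≤ ·) with _ | ⟨a, t⟩
    · exfalso; apply hs
      have h2 := Multiset.sort_eq s (· ≤ ·)
      rw [h] at h2; simpa using h2.symm
    · exact ⟨_, _, rfl⟩
  rw [ht]
  have hsort : List.Pairwise (· ≤ ·) (a :: t) := ht ▸ Multiset.pairwise_sort s (· ≤ ·)
  rw [List.pairwise_cons] at hsort
  have hmem : ∀ x ∈ s, x = a ∨ x ∈ t := by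
    intro x hx
    have h3 : x ∈ Multiset.sort s (· ≤ ·) := (Multiset.mem_sort _).mpr hx
    rw [ht] at h3; simpa using h3
  have hamem : a ∈ s := (Multiset.mem_sort (· ≤ ·)).mp (ht ▸ List.mem_cons_self)
  have hval : ((0:ℝ) :: a :: t)[1]! = a := by
    rw [List.getElem!_cons_succ, List.getElem!_cons_zero]
  rw [hval]
  refine ⟨hamem, fun x hx => ?_⟩
  rcases hmem x hx with h | h
  · exact le_of_eq h.symm
  · exact hsort.1 x h

/-- For the n-to-n interconnection `B = pJ`, the second-smallest eigenvalue
of the supra-Laplacian `Q = [[Q₁ + np·I, −pJ], [−pJ, Q₂ + np·I]]` equals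
`min(2np, np + λ₂(Q₁), np + λ₂(Q₂))`; in particular `λ₂(Q) = 2np` iff
`np ≤ min(λ₂(Q₁), λ₂(Q₂))`, so the structural transition occurs at
`p* = min(λ₂(Q₁), λ₂(Q₂))/n`. -/
theorem stmt_12
    (n : ℕ) (hn : 2 ≤ n) (p : ℝ) (hp : 0 ≤ p)
    (Q₁ Q₂ : Matrix (Fin n) (Fin n) ℝ)
    (hQ₁ : Q₁.PosSemidef) (hQ₂ : Q₂.PosSemidef)
    (hQ₁u : Q₁ *ᵥ (fun _ => (1:ℝ)) = 0) (hQ₂u : Q₂ *ᵥ (fun _ => (1:ℝ)) = 0)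
    (Q : Matrix (Fin n ⊕ Fin n) (Fin n ⊕ Fin n) ℝ)
    (hQdef : Q = Matrix.fromBlocks (Q₁ + ((n:ℝ) * p) • 1) (-(p • allOnes n))
      (-(p • allOnes n)) (Q₂ + ((n:ℝ) * p) • 1))
    (hQH : Q.IsHermitian) :
    (sortedEigs hQH)[1]! =
      min (2 * (n:ℝ) * p)
        (min ((n:ℝ) * p + (sortedEigs hQ₁.isHermitian)[1]!)
          ((n:ℝ) * p + (sortedEigs hQ₂.isHermitian)[1]!)) ∧
      ((sortedEigs hQH)[1]! = 2 * (n:ℝ) * p ↔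
        (n:ℝ) * p ≤
          min ((sortedEigs hQ₁.isHermitian)[1]!) ((sortedEigs hQ₂.isHermitian)[1]!)) := by
  classical
  set c : ℝ := (n:ℝ) * p with hc
  have hc0 : 0 ≤ c := by positivity
  obtain ⟨m, hm⟩ : ∃ m, n = 1 + m := ⟨n - 1, by omega⟩
  have hm1 : 1 ≤ m := by omega
  let e : Fin 1 ⊕ Fin m ≃ Fin n := finSumFinEquiv.trans (finCongr hm.symm)
  set z : Fin n := e (Sum.inl 0) with hz
  have hnpos : (0:ℝ) < n := by
    have : (2:ℝ) ≤ n := by exact_mod_cast hn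
    linarith
  have hsq : Real.sqrt n * Real.sqrt n = n := Real.mul_self_sqrt (le_of_lt hnpos)
  have hsqpos : 0 < Real.sqrt n := Real.sqrt_pos.mpr hnpos
  set w : EuclideanSpace ℝ (Fin n) := WithLp.toLp 2 (fun _ => (Real.sqrt n)⁻¹ : Fin n → ℝ) with hw
  have hwinner : (inner ℝ w w : ℝ) = 1 := by
    rw [PiLp.inner_apply]
    simp only [RCLike.inner_apply, starRingEnd_apply, star_trivial, hw]
    rw [Finset.sum_const, Finset.card_univ, Fintype.card_fin, nsmul_eq_mul,
      ← mul_inv, hsq, mul_inv_cancel₀ hnpos.ne']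
  -- orthonormal basis extending w
  obtain ⟨b, hb⟩ : ∃ bb : OrthonormalBasis (Fin n) ℝ (EuclideanSpace ℝ (Fin n)),
      ∀ i ∈ ({z} : Set (Fin n)), bb i = w := by
    apply Orthonormal.exists_orthonormalBasis_extension_of_card_eq (v := fun _ => w)
    · rw [orthonormal_iff_ite]
      intro i j
      have hij : i = j := Subsingleton.elim i j
      subst hij
      simp only [if_true, eq_self_iff_true]; exact hwinner
    · simp [finrank_euclideanSpace]
  have hbz : b z = w := hb z rfl
  set P : Matrix (Fin n) (Fin n) ℝ := Matrix.of (fun i j => b j i) with hP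
  have hPtP : Pᵀ * P = 1 := by
    ext i j
    have horth := b.orthonormal
    rw [orthonormal_iff_ite] at horth
    have h := horth i j
    rw [PiLp.inner_apply] at h
    simp only [RCLike.inner_apply, starRingEnd_apply, star_trivial] at h
    simpa [Matrix.mul_apply, hP, Matrix.one_apply, mul_comm] using h
  have hEntry : ∀ (A : Matrix (Fin n) (Fin n) ℝ) (i j : Fin n),
      (Pᵀ * A * P) i j = (fun k => b i k) ⬝ᵥ (A *ᵥ fun k => b j k) := by
    intro A i j
    rw [Matrix.mul_assoc]
    simp [Matrix.mul_apply, Matrix.mulVec, dotProduct, hP]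
  have hbu : ∀ i : Fin n, (∑ k, b i k) = Real.sqrt n * (if i = z then 1 else 0) := by
    intro i
    have horth := b.orthonormal
    rw [orthonormal_iff_ite] at horth
    have h := horth i z
    rw [PiLp.inner_apply] at h
    simp only [RCLike.inner_apply, starRingEnd_apply, star_trivial, hbz] at h
    have h2 : (∑ k, b i k) * (Real.sqrt n)⁻¹ = if i = z then 1 else 0 := by
      rw [Finset.sum_mul]; rw [← h]; simp [hw, mul_comm]
    rcases eq_or_ne i z with h' | h'
    · subst h'
      simp only [eq_self_iff_true, if_true, mul_one] at h2 ⊢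
      field_simp at h2
      linarith
    · simp only [if_neg h', mul_zero] at h2 ⊢
      rcases mul_eq_zero.mp h2 with h3 | h3
      · exact h3
      · exact absurd h3 (by positivity)
  -- block decomposition for kernel matrices
  have hker : ∀ (A : Matrix (Fin n) (Fin n) ℝ), (A *ᵥ fun _ => (1:ℝ)) = 0 → A.IsHermitian →
      ∃ R : Matrix (Fin m) (Fin m) ℝ, R.IsHermitian ∧
        (Matrix.reindex e.symm e.symm) (Pᵀ * A * P) = Matrix.fromBlocks 0 0 0 R := by
    intro A hAu hAh
    have hAt : Aᵀ = A := by
      rw [← Matrix.conjTranspose_eq_transpose_of_trivial]; exact hAh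
    have hAw : (A *ᵥ fun k => b z k) = 0 := by
      rw [hbz]
      rw [show ((w : Fin n → ℝ)) = (Real.sqrt n)⁻¹ • (fun _ => (1:ℝ)) from
        funext fun k => by simp [hw]]
      rw [Matrix.mulVec_smul, hAu, smul_zero]
    have hrow : ∀ j, (Pᵀ * A * P) z j = 0 := by
      intro j
      rw [hEntry, dotProduct_mulVec]
      have h4 : (fun k => b z k) ᵥ* A = 0 := by
        rw [← hAt, Matrix.vecMul_transpose, hAw]
      rw [h4, zero_dotProduct]
    have hcol : ∀ i, (Pᵀ * A * P) i z = 0 := by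
      intro i
      rw [hEntry, hAw, dotProduct_zero]
    have hMt : (Pᵀ * A * P)ᵀ = Pᵀ * A * P := by
      rw [Matrix.transpose_mul, Matrix.transpose_mul, Matrix.transpose_transpose, hAt,
        Matrix.mul_assoc]
    refine ⟨(Matrix.reindex e.symm e.symm (Pᵀ * A * P)).toBlocks₂₂, ?_, ?_⟩
    · rw [Matrix.IsHermitian, Matrix.conjTranspose_eq_transpose_of_trivial]
      ext i j
      show (Pᵀ * A * P) (e (Sum.inr j)) (e (Sum.inr i)) = (Pᵀ * A * P) (e (Sum.inr i)) (e (Sum.inr j))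
      conv_lhs => rw [← hMt]
      rfl
    · ext x y
      rcases x with x | x <;> rcases y with y | y
      · have hx : x = 0 := Subsingleton.elim x 0
        subst hx
        show (Pᵀ * A * P) z (e (Sum.inl y)) = _
        rw [hrow]; rfl
      · have hx : x = 0 := Subsingleton.elim x 0
        subst hx
        show (Pᵀ * A * P) z (e (Sum.inr y)) = _
        rw [hrow]; rfl
      · have hy : y = 0 := Subsingleton.elim y 0
        subst hy
        show (Pᵀ * A * P) (e (Sum.inr x)) z = _
        rw [hcol]; rfl
      · rfl
  obtain ⟨R₁, hR₁h, hR₁⟩ := hker Q₁ hQ₁u hQ₁.1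
  obtain ⟨R₂, hR₂h, hR₂⟩ := hker Q₂ hQ₂u hQ₂.1
  -- charpoly of the layer matrices
  have hside : ∀ (A : Matrix (Fin n) (Fin n) ℝ) (R : Matrix (Fin m) (Fin m) ℝ),
      (Matrix.reindex e.symm e.symm) (Pᵀ * A * P) = Matrix.fromBlocks 0 0 0 R →
      A.charpoly = X * R.charpoly := by
    intro A R h
    have h1 : (Pᵀ * A * P).charpoly = A.charpoly := my_charpoly_conj P A hPtP
    have h2 : ((Matrix.reindex e.symm e.symm) (Pᵀ * A * P)).charpoly = (Pᵀ * A * P).charpoly :=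
      Matrix.charpoly_reindex _ _
    rw [← h1, ← h2, h, Matrix.charpoly_fromBlocks_zero₁₂]
    congr 1
    rw [Matrix.charpoly, Matrix.det_fin_one]
    simp
  have hcp₁ : Q₁.charpoly = X * R₁.charpoly := hside Q₁ R₁ hR₁
  have hcp₂ : Q₂.charpoly = X * R₂.charpoly := hside Q₂ R₂ hR₂
  -- the doubled conjugation
  set Vb : Matrix (Fin n ⊕ Fin n) (Fin n ⊕ Fin n) ℝ := Matrix.fromBlocks P 0 0 P with hVb
  have hVt : Vbᵀ = Matrix.fromBlocks Pᵀ 0 0 Pᵀ := by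
    rw [hVb, Matrix.fromBlocks_transpose]; simp
  have hVtV : Vbᵀ * Vb = 1 := by
    rw [hVt, hVb, Matrix.fromBlocks_multiply]
    simp [hPtP, Matrix.fromBlocks_one]
  have hM : Vbᵀ * Q * Vb = Matrix.fromBlocks (Pᵀ * (Q₁ + c • 1) * P)
      (Pᵀ * (-(p • allOnes n)) * P) (Pᵀ * (-(p • allOnes n)) * P) (Pᵀ * (Q₂ + c • 1) * P) := by
    rw [hQdef, hVt, hVb, Matrix.fromBlocks_multiply, Matrix.fromBlocks_multiply]
    simp
  -- shifted block decomposition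
  have hFA : ∀ (A : Matrix (Fin n) (Fin n) ℝ) (R : Matrix (Fin m) (Fin m) ℝ),
      (Matrix.reindex e.symm e.symm) (Pᵀ * A * P) = Matrix.fromBlocks 0 0 0 R →
      (Matrix.reindex e.symm e.symm) (Pᵀ * (A + c • 1) * P)
        = Matrix.fromBlocks (c • 1) 0 0 (R + c • 1) := by
    intro A R h
    have h1 : Pᵀ * (A + c • 1) * P = Pᵀ * A * P + c • (1 : Matrix (Fin n) (Fin n) ℝ) := by
      rw [Matrix.mul_add, Matrix.add_mul]
      congr 1
      rw [Matrix.mul_smul, Matrix.smul_mul, Matrix.mul_one, hPtP]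
    rw [h1, Matrix.reindex_apply, Matrix.submatrix_add]
    have h2 : (c • (1 : Matrix (Fin n) (Fin n) ℝ)).submatrix (e.symm.symm) (e.symm.symm)
        = c • (1 : Matrix (Fin 1 ⊕ Fin m) (Fin 1 ⊕ Fin m) ℝ) := by
      ext i j
      simp [Matrix.submatrix_apply, Matrix.smul_apply, Matrix.one_apply,
        Equiv.apply_eq_iff_eq]
    have h3 : (Pᵀ * A * P).submatrix (e.symm.symm) (e.symm.symm)
        = Matrix.fromBlocks 0 0 0 R := h
    rw [Pi.add_apply, Pi.add_apply, h3, h2]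
    rw [← Matrix.fromBlocks_one (l := Fin 1) (m := Fin m) (α := ℝ), Matrix.fromBlocks_smul,
      Matrix.fromBlocks_add]
    simp
  have hFA₁ := hFA Q₁ R₁ hR₁
  have hFA₂ := hFA Q₂ R₂ hR₂
  -- the interconnection block
  have hFB : (Matrix.reindex e.symm e.symm) (Pᵀ * (-(p • allOnes n)) * P)
      = Matrix.fromBlocks (-(c • 1)) 0 0 0 := by
    have hJ : ∀ i j, (Pᵀ * (-(p • allOnes n)) * P) i j
        = -(p * ((Real.sqrt n * (if i = z then 1 else 0))
            * (Real.sqrt n * (if j = z then 1 else 0)))) := by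
      intro i j
      rw [hEntry]
      have hmv : (-(p • allOnes n)) *ᵥ (fun k => b j k)
          = -(p • (allOnes n *ᵥ fun k => b j k)) := by
        rw [Matrix.neg_mulVec, Matrix.smul_mulVec]
      have hones : allOnes n *ᵥ (fun k => b j k) = fun _ => ∑ k, b j k := by
        funext l; simp [allOnes, Matrix.mulVec, dotProduct]
      rw [hmv, hones, dotProduct_neg, dotProduct_smul]
      have hdc : ((fun k => b i k) ⬝ᵥ fun _ => ∑ k, b j k)
          = (∑ k, b i k) * (∑ k, b j k) := by
        simp [dotProduct, Finset.sum_mul]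
      rw [hdc, hbu i, hbu j, smul_eq_mul]
    ext x y
    have hinr : ∀ u : Fin m, e (Sum.inr u) ≠ z := fun u => by
      rw [hz]; exact e.injective.ne (by simp)
    have hinl : ∀ u : Fin 1, e (Sum.inl u) = z := fun u => by
      rw [hz, Subsingleton.elim u 0]
    rcases x with x | x <;> rcases y with y | y
    · rw [Matrix.reindex_apply, Matrix.submatrix_apply, Equiv.symm_symm, hJ, hinl x, hinl y]
      simp only [eq_self_iff_true, if_true, mul_one]
      rw [hsq]
      show -(p * ↑n) = (-(c • (1 : Matrix (Fin 1) (Fin 1) ℝ))) x y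
      rw [Subsingleton.elim x 0, Subsingleton.elim y 0]
      simp [hc]
      ring
    · rw [Matrix.reindex_apply, Matrix.submatrix_apply, Equiv.symm_symm, hJ]
      simp only [if_neg (hinr y), mul_zero, neg_zero]
      rfl
    · rw [Matrix.reindex_apply, Matrix.submatrix_apply, Equiv.symm_symm, hJ]
      simp only [if_neg (hinr x), mul_zero, zero_mul, neg_zero]
      rfl
    · rw [Matrix.reindex_apply, Matrix.submatrix_apply, Equiv.symm_symm, hJ]
      simp only [if_neg (hinr x), mul_zero, zero_mul, neg_zero]
      rfl
  -- assemble the big block matrix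
  set τ : ((Fin 1 ⊕ Fin m) ⊕ (Fin 1 ⊕ Fin m)) ≃ ((Fin 1 ⊕ Fin 1) ⊕ (Fin m ⊕ Fin m)) :=
    Equiv.sumSumSumComm (Fin 1) (Fin m) (Fin 1) (Fin m) with hτ
  set K : Matrix (Fin 1 ⊕ Fin 1) (Fin 1 ⊕ Fin 1) ℝ :=
    Matrix.fromBlocks (c • 1) (-(c • 1)) (-(c • 1)) (c • 1) with hK
  have hstep : (Matrix.reindex (e.sumCongr e).symm (e.sumCongr e).symm) (Vbᵀ * Q * Vb)
      = Matrix.fromBlocks (Matrix.fromBlocks (c • 1) 0 0 (R₁ + c • 1))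
          (Matrix.fromBlocks (-(c • 1)) 0 0 0)
          (Matrix.fromBlocks (-(c • 1)) 0 0 0)
          (Matrix.fromBlocks (c • 1) 0 0 (R₂ + c • 1)) := by
    ext x y
    rcases x with x | x <;> rcases y with y | y
    · show (Vbᵀ * Q * Vb) (Sum.inl (e x)) (Sum.inl (e y)) = _
      rw [hM]
      rw [← hFA₁]
      rfl
    · show (Vbᵀ * Q * Vb) (Sum.inl (e x)) (Sum.inr (e y)) = _
      rw [hM]
      rw [← hFB]
      rfl
    · show (Vbᵀ * Q * Vb) (Sum.inr (e x)) (Sum.inl (e y)) = _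
      rw [hM]
      rw [← hFB]
      rfl
    · show (Vbᵀ * Q * Vb) (Sum.inr (e x)) (Sum.inr (e y)) = _
      rw [hM]
      rw [← hFA₂]
      rfl
  have hT : (Matrix.reindex τ τ) ((Matrix.reindex (e.sumCongr e).symm (e.sumCongr e).symm) (Vbᵀ * Q * Vb))
      = Matrix.fromBlocks K 0 0 (Matrix.fromBlocks (R₁ + c • 1) 0 0 (R₂ + c • 1)) := by
    rw [hstep]
    ext x y
    rcases x with (x | x) | (x | x) <;> rcases y with (y | y) | (y | y) <;>
      simp [hτ, Equiv.sumSumSumComm, Equiv.sumAssoc, Equiv.sumComm, hK,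
        Matrix.reindex_apply, Matrix.submatrix_apply, Matrix.fromBlocks]
  -- characteristic polynomial of Q
  have hQcp : Q.charpoly = K.charpoly * ((R₁ + c • 1).charpoly * (R₂ + c • 1).charpoly) := by
    have h1 : (Vbᵀ * Q * Vb).charpoly = Q.charpoly := my_charpoly_conj Vb Q hVtV
    have h2 := Matrix.charpoly_reindex (e.sumCongr e).symm (Vbᵀ * Q * Vb)
    have h3 := Matrix.charpoly_reindex τ ((Matrix.reindex (e.sumCongr e).symm (e.sumCongr e).symm) (Vbᵀ * Q * Vb))
    rw [hT] at h3
    rw [← h1, ← h2, ← h3, Matrix.charpoly_fromBlocks_zero₁₂, Matrix.charpoly_fromBlocks_zero₁₂]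
  -- charpoly of K
  have hKcp : K.charpoly = X * (X - C (2 * c)) := by
    set q : (Fin 1 ⊕ Fin 1) ≃ Fin 2 := finSumFinEquiv.trans (finCongr (by norm_num)) with hq
    have hq0 : q.symm 0 = Sum.inl 0 := rfl
    have hq1 : q.symm 1 = Sum.inr 0 := rfl
    have hdet : K.charpoly = ((charmatrix K).submatrix q.symm q.symm).det := by
      rw [Matrix.charpoly, ← Matrix.det_submatrix_equiv_self q.symm]
    rw [hdet, Matrix.det_fin_two]
    simp only [Matrix.submatrix_apply, hq0, hq1]
    rw [Matrix.charmatrix_apply_eq, Matrix.charmatrix_apply_eq,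
      Matrix.charmatrix_apply_ne _ _ _ (by simp), Matrix.charmatrix_apply_ne _ _ _ (by simp)]
    have e11 : K (Sum.inl 0) (Sum.inl 0) = c := by simp [hK, Matrix.fromBlocks]
    have e22 : K (Sum.inr 0) (Sum.inr 0) = c := by simp [hK, Matrix.fromBlocks]
    have e12 : K (Sum.inl 0) (Sum.inr 0) = -c := by simp [hK, Matrix.fromBlocks]
    have e21 : K (Sum.inr 0) (Sum.inl 0) = -c := by simp [hK, Matrix.fromBlocks]
    rw [e11, e22, e12, e21, show (2:ℝ) * c = c + c by ring, map_add, map_neg]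
    ring
  have hKroots : K.charpoly.roots = (0 : ℝ) ::ₘ {2 * c} := by
    rw [hKcp, Polynomial.roots_mul (Polynomial.monic_X.mul
      (Polynomial.monic_X_sub_C (2*c))).ne_zero, Polynomial.roots_X,
      Polynomial.roots_X_sub_C, Multiset.singleton_add]
  -- eigenvalue multisets
  set r₁ : Multiset ℝ := Finset.univ.val.map hR₁h.eigenvalues with hr₁def
  set r₂ : Multiset ℝ := Finset.univ.val.map hR₂h.eigenvalues with hr₂def
  set sQ : Multiset ℝ := 2*c ::ₘ (r₁.map (fun x => x + c) + r₂.map (fun x => x + c)) with hsQdef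
  have hQroots : (Finset.univ.val.map hQH.eigenvalues) = 0 ::ₘ sQ := by
    rw [← my_roots_eigs hQH, hQcp,
      Polynomial.roots_mul ((Matrix.charpoly_monic K).mul
        ((Matrix.charpoly_monic _).mul (Matrix.charpoly_monic _))).ne_zero,
      Polynomial.roots_mul ((Matrix.charpoly_monic _).mul (Matrix.charpoly_monic _)).ne_zero,
      hKroots, my_roots_shift hR₁h c, my_roots_shift hR₂h c, hsQdef, hr₁def, hr₂def]
    rw [Multiset.cons_add, Multiset.singleton_add]
  have hQ₁roots : (Finset.univ.val.map hQ₁.isHermitian.eigenvalues) = 0 ::ₘ r₁ := by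
    rw [← my_roots_eigs hQ₁.isHermitian, hcp₁,
      Polynomial.roots_mul (mul_ne_zero Polynomial.X_ne_zero (Matrix.charpoly_monic R₁).ne_zero),
      Polynomial.roots_X, my_roots_eigs hR₁h, Multiset.singleton_add, hr₁def]
  have hQ₂roots : (Finset.univ.val.map hQ₂.isHermitian.eigenvalues) = 0 ::ₘ r₂ := by
    rw [← my_roots_eigs hQ₂.isHermitian, hcp₂,
      Polynomial.roots_mul (mul_ne_zero Polynomial.X_ne_zero (Matrix.charpoly_monic R₂).ne_zero),
      Polynomial.roots_X, my_roots_eigs hR₂h, Multiset.singleton_add, hr₂def]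
  -- nonnegativity and nonemptiness
  have hr₁pos : ∀ x ∈ r₁, (0:ℝ) ≤ x := by
    intro x hx
    have hmem : x ∈ Finset.univ.val.map hQ₁.isHermitian.eigenvalues := by
      rw [hQ₁roots]; exact Multiset.mem_cons_of_mem hx
    obtain ⟨i, _, hi⟩ := Multiset.mem_map.mp hmem
    rw [← hi]; exact hQ₁.eigenvalues_nonneg i
  have hr₂pos : ∀ x ∈ r₂, (0:ℝ) ≤ x := by
    intro x hx
    have hmem : x ∈ Finset.univ.val.map hQ₂.isHermitian.eigenvalues := by
      rw [hQ₂roots]; exact Multiset.mem_cons_of_mem hx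
    obtain ⟨i, _, hi⟩ := Multiset.mem_map.mp hmem
    rw [← hi]; exact hQ₂.eigenvalues_nonneg i
  have hr₁ne : r₁ ≠ 0 := by
    intro h0
    have hcard := congrArg Multiset.card h0
    rw [hr₁def] at hcard
    simp at hcard
    omega
  have hr₂ne : r₂ ≠ 0 := by
    intro h0
    have hcard := congrArg Multiset.card h0
    rw [hr₂def] at hcard
    simp at hcard
    omega
  have hsQne : sQ ≠ 0 := by rw [hsQdef]; exact Multiset.cons_ne_zero
  have hsQpos : ∀ x ∈ sQ, (0:ℝ) ≤ x := by
    intro x hx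
    rw [hsQdef] at hx
    rcases Multiset.mem_cons.mp hx with h | h
    · rw [h]; positivity
    · rcases Multiset.mem_add.mp h with h | h
      · obtain ⟨y, hy, hyx⟩ := Multiset.mem_map.mp h
        rw [← hyx]; have := hr₁pos y hy; linarith
      · obtain ⟨y, hy, hyx⟩ := Multiset.mem_map.mp h
        rw [← hyx]; have := hr₂pos y hy; linarith
  obtain ⟨ha₁mem, ha₁min⟩ := my_sort_second r₁ hr₁ne hr₁pos
  obtain ⟨ha₂mem, ha₂min⟩ := my_sort_second r₂ hr₂ne hr₂pos
  obtain ⟨haQmem, haQmin⟩ := my_sort_second sQ hsQne hsQpos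
  set a₁ : ℝ := (Multiset.sort ((0:ℝ) ::ₘ r₁) (· ≤ ·))[1]! with ha₁def
  set a₂ : ℝ := (Multiset.sort ((0:ℝ) ::ₘ r₂) (· ≤ ·))[1]! with ha₂def
  set aQ : ℝ := (Multiset.sort ((0:ℝ) ::ₘ sQ) (· ≤ ·))[1]! with haQdef
  have hs₁ : (sortedEigs hQ₁.isHermitian)[1]! = a₁ := by
    unfold sortedEigs; rw [hQ₁roots]
  have hs₂ : (sortedEigs hQ₂.isHermitian)[1]! = a₂ := by
    unfold sortedEigs; rw [hQ₂roots]
  have hsQ' : (sortedEigs hQH)[1]! = aQ := by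
    unfold sortedEigs; rw [hQroots]
  -- the key minimum computation
  have key : aQ = min (2*c) (min (c + a₁) (c + a₂)) := by
    apply le_antisymm
    · apply le_min
      · exact haQmin _ (by rw [hsQdef]; exact Multiset.mem_cons_self _ _)
      apply le_min
      · apply haQmin
        rw [hsQdef]
        refine Multiset.mem_cons_of_mem (Multiset.mem_add.mpr (Or.inl ?_))
        exact Multiset.mem_map.mpr ⟨a₁, ha₁mem, by ring⟩
      · apply haQmin
        rw [hsQdef]
        refine Multiset.mem_cons_of_mem (Multiset.mem_add.mpr (Or.inr ?_))
        exact Multiset.mem_map.mpr ⟨a₂, ha₂mem, by ring⟩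
    · have hmem := haQmem
      rw [hsQdef] at hmem
      rcases Multiset.mem_cons.mp hmem with h | h
      · rw [h]; exact min_le_left _ _
      · rcases Multiset.mem_add.mp h with h | h
        · obtain ⟨x, hx, hxe⟩ := Multiset.mem_map.mp h
          have h5 : c + a₁ ≤ aQ := by
            rw [← hxe]; have := ha₁min x hx; linarith
          exact le_trans (le_trans (min_le_right _ _) (min_le_left _ _)) h5
        · obtain ⟨x, hx, hxe⟩ := Multiset.mem_map.mp h
          have h5 : c + a₂ ≤ aQ := by
            rw [← hxe]; have := ha₂min x hx; linarith
          exact le_trans (le_trans (min_le_right _ _) (min_le_right _ _)) h5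
  have h2c : 2 * (n:ℝ) * p = 2 * c := by rw [hc]; ring
  rw [hsQ', hs₁, hs₂, h2c]
  constructor
  · exact key
  · constructor
    · intro hEq
      have hmin : min (2*c) (min (c + a₁) (c + a₂)) = 2*c := by rw [← key, hEq]
      apply le_min
      · have h6 : 2*c ≤ c + a₁ := by
          rw [← hmin]
          exact le_trans (min_le_right _ _) (min_le_left _ _)
        linarith
      · have h6 : 2*c ≤ c + a₂ := by
          rw [← hmin]
          exact le_trans (min_le_right _ _) (min_le_right _ _)
        linarith
    · intro hle
      rw [key]
      apply min_eq_left
      apply le_min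
      · have := le_trans hle (min_le_left a₁ a₂); linarith
      · have := le_trans hle (min_le_right a₁ a₂); linarith
end

section
/- Let Q₁ be a symmetric n×n real matrix with Q₁u = 0, let p ≥ 0, and consider two identical layers (Q₂ = Q₁) with the (n−1)-to-(n−1) interconnection B = p(J − I). If x ∈ ℝⁿ satisfies Q₁ x = μ x and uᵀx = 0, then (x, −x) ∈ ℝ^{2n} satisfies [[Q₁ + (n−1)p·I, −p(J−I)], [−p(J−I), Q₁ + (n−1)p·I]] · (x, −x) = (μ + (n−2)p) · (x, −x). Moreover, if Q₁ is positive semidefinite and n ≥ 2, the second-smallest eigenvalue of this supra-Laplacian equals min(2(n−1)p, λ₂(Q₁) + (n−2)p), so the structural transition occurs at p* = λ₂(Q₁)/n. -/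
open Matrix Polynomial

section Aux

variable {R : Type*} [CommRing R] {ι : Type*} [Fintype ι] [DecidableEq ι]

lemma my_charpoly_conj_s13 (U A V : Matrix ι ι R) (hUV : U * V = 1) (hVU : V * U = 1) :
    (U * A * V).charpoly = A.charpoly := by
  have hcm : charmatrix (U * A * V) =
      ((C : R →+* R[X]).mapMatrix U) * charmatrix A * ((C : R →+* R[X]).mapMatrix V) := by
    unfold charmatrix
    rw [mul_sub, sub_mul]
    congr 1
    · rw [mul_assoc, scalar_commute (X : R[X]) (Commute.all _), ← mul_assoc,
        ← _root_.map_mul, hUV]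
      simp
    · rw [mul_assoc, ← _root_.map_mul, ← _root_.map_mul, mul_assoc]
  have h1 : ((C : R →+* R[X]).mapMatrix V) * ((C : R →+* R[X]).mapMatrix U) = 1 := by
    rw [← _root_.map_mul, hVU]; simp
  rw [Matrix.charpoly, hcm, Matrix.det_mul, Matrix.det_mul, mul_comm, ← mul_assoc,
    ← Matrix.det_mul, h1]
  simp [Matrix.charpoly]

lemma my_det_add_col_mul_row (A : Matrix ι ι R) (a b : ι → R) (s : R)
    (hb : b ᵥ* A = s • b) :
    s * (A + replicateCol Unit a * replicateRow Unit b).det = A.det * (s + b ⬝ᵥ a) := by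
  set N : Matrix (ι ⊕ Unit) (ι ⊕ Unit) R := fromBlocks A (replicateCol Unit a) (-(replicateRow Unit b)) 1 with hN
  have h1 : N * fromBlocks 1 0 (replicateRow Unit b) 1 = fromBlocks (A + replicateCol Unit a * replicateRow Unit b)
      (replicateCol Unit a) 0 1 := by
    rw [hN, fromBlocks_multiply]
    congr 1 <;> simp
  have h2 : (fromBlocks 1 0 (replicateRow Unit b) (s • 1) : Matrix (ι ⊕ Unit) (ι ⊕ Unit) R) * N =
      fromBlocks A (replicateCol Unit a) 0 ((b ⬝ᵥ a + s) • 1) := by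
    rw [hN, fromBlocks_multiply, fromBlocks_inj]
    refine ⟨by simp, by simp, ?_, ?_⟩
    · rw [← replicateRow_vecMul, hb]
      ext i j
      simp [Matrix.replicateRow_apply]
    · ext i j
      simp [Matrix.one_apply, Matrix.smul_apply, add_mul]
  have e1 : N.det = (A + replicateCol Unit a * replicateRow Unit b).det := by
    have := congrArg Matrix.det h1
    rwa [Matrix.det_mul, det_fromBlocks_zero₁₂, det_fromBlocks_zero₂₁, Matrix.det_one,
      Matrix.det_one, one_mul, mul_one, mul_one] at this
  have e2 : s * N.det = A.det * (s + b ⬝ᵥ a) := by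
    have := congrArg Matrix.det h2
    rw [Matrix.det_mul, det_fromBlocks_zero₁₂, det_fromBlocks_zero₂₁, Matrix.det_one, one_mul,
      Matrix.det_smul, Matrix.det_smul, Matrix.det_one] at this
    simpa [add_comm (b ⬝ᵥ a) s] using this
  rw [← e1, e2]

lemma my_charpoly_diagonal (d : ι → ℝ) :
    (diagonal d).charpoly = ∏ i, (X - C (d i)) := by
  have h : charmatrix (diagonal d) = diagonal fun i => X - C (d i) := by
    ext i j
    by_cases hij : i = j
    · subst hij; simp [charmatrix_apply_eq]
    · simp [charmatrix_apply_ne _ _ _ hij, diagonal_apply_ne _ hij]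
  rw [Matrix.charpoly, h, det_diagonal]

lemma my_charpoly_hermitian_shift {A : Matrix ι ι ℝ} (hA : A.IsHermitian) (c : ℝ) :
    (A + c • (1 : Matrix ι ι ℝ)).charpoly = ∏ i, (X - C (hA.eigenvalues i + c)) := by
  set U : Matrix ι ι ℝ := (IsHermitian.eigenvectorUnitary hA : Matrix ι ι ℝ) with hU
  have hU1 : U * star U = 1 := Matrix.mem_unitaryGroup_iff.mp (IsHermitian.eigenvectorUnitary hA).2
  have hU2 : star U * U = 1 := Matrix.mem_unitaryGroup_iff'.mp (IsHermitian.eigenvectorUnitary hA).2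
  have key : A + c • (1 : Matrix ι ι ℝ) =
      U * diagonal (fun i => hA.eigenvalues i + c) * star U := by
    conv_lhs => rw [hA.spectral_theorem, Unitary.conjStarAlgAut_apply]
    have h2 : c • (1 : Matrix ι ι ℝ) = U * (c • (1 : Matrix ι ι ℝ)) * star U := by
      rw [Matrix.mul_smul, Matrix.smul_mul, mul_one, hU1]
    rw [h2, ← hU]
    rw [← Matrix.add_mul, ← Matrix.mul_add]
    congr 2
    rw [RCLike.ofReal_real_eq_id]
    rw [Matrix.smul_one_eq_diagonal, ← diagonal_add]
    rfl
  rw [key, my_charpoly_conj_s13 _ _ _ hU1 hU2, my_charpoly_diagonal]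

lemma my_charpoly_blocks (A B : Matrix ι ι ℝ) :
    (fromBlocks A B B A).charpoly = (A + B).charpoly * (A - B).charpoly := by
  set S : Matrix (ι ⊕ ι) (ι ⊕ ι) ℝ := fromBlocks 1 1 1 (-1) with hS
  set V : Matrix (ι ⊕ ι) (ι ⊕ ι) ℝ := (1/2 : ℝ) • S with hV
  have hSS : S * S = (2 : ℝ) • 1 := by
    rw [hS, fromBlocks_multiply, ← fromBlocks_one, fromBlocks_smul]
    congr 1 <;> simp <;> norm_num [two_smul]
  have hSV : S * V = 1 := by
    rw [hV, Matrix.mul_smul, hSS, smul_smul]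
    norm_num
  have hVS : V * S = 1 := by
    rw [hV, Matrix.smul_mul, hSS, smul_smul]
    norm_num
  have key : S * (fromBlocks A B B A) * V = fromBlocks (A + B) 0 0 (A - B) := by
    rw [hV, Matrix.mul_smul, hS, fromBlocks_multiply, fromBlocks_multiply, fromBlocks_smul]
    congr 1 <;> simp [Matrix.mul_neg] <;>
      module
  calc (fromBlocks A B B A).charpoly = (S * (fromBlocks A B B A) * V).charpoly :=
        (my_charpoly_conj_s13 S _ V hSV hVS).symm
    _ = _ := by rw [key, Matrix.charpoly_fromBlocks_zero₁₂]

lemma my_sort_get1 (m : Multiset ℝ) (a b : ℝ) (hab : a ≤ b) (m' : Multiset ℝ)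
    (hm : m = a ::ₘ b ::ₘ m') (hall : ∀ x ∈ m', b ≤ x) :
    (Multiset.sort m (· ≤ ·))[1]! = b := by
  have hsort : Multiset.sort m (· ≤ ·) = a :: b :: Multiset.sort m' (· ≤ ·) := by
    refine (fun hp h1 h2 => List.Perm.eq_of_pairwise' (r := fun x y : ℝ => x ≤ y) h1 h2 hp) ?_ ?_ ?_
    · rw [← Multiset.coe_eq_coe, Multiset.sort_eq, hm, ← Multiset.cons_coe, ← Multiset.cons_coe,
        Multiset.sort_eq]
    · exact Multiset.pairwise_sort _ _
    · rw [List.pairwise_cons, List.pairwise_cons]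
      refine ⟨?_, ?_, Multiset.pairwise_sort _ _⟩
      · intro x hx
        rcases List.mem_cons.mp hx with h | h
        · exact h ▸ hab
        · exact le_trans hab (hall x (by rwa [← Multiset.mem_sort (· ≤ ·)]))
      · intro x hx
        exact hall x (by rwa [← Multiset.mem_sort (· ≤ ·)])
  rw [hsort]
  simp

lemma my_exists_min (m : Multiset ℝ) (hm : m ≠ 0) :
    ∃ b m', m = b ::ₘ m' ∧ ∀ x ∈ m, b ≤ x := by
  obtain ⟨l, hlm, hls⟩ : ∃ l : List ℝ, (l : Multiset ℝ) = m ∧ l.Pairwise (· ≤ ·) :=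
    ⟨Multiset.sort m (· ≤ ·), Multiset.sort_eq _ _, Multiset.pairwise_sort _ _⟩
  cases l with
  | nil => exact absurd hlm.symm (by simpa using hm)
  | cons b t =>
    refine ⟨b, (t : Multiset ℝ), by rw [← hlm, ← Multiset.cons_coe], ?_⟩
    intro x hx
    rw [← hlm, Multiset.mem_coe, List.mem_cons] at hx
    rcases hx with h | h
    · exact h ▸ le_refl _
    · exact (List.pairwise_cons.mp hls).1 x h

end Aux

lemma my_key_rank_one {n : ℕ} (Q₁ : Matrix (Fin n) (Fin n) ℝ)
    (hcol : ∀ j, ∑ i, Q₁ i j = 0) (d t : ℝ) :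
    (X - C d) * (Q₁ + d • (1 : Matrix (Fin n) (Fin n) ℝ) - t • allOnes n).charpoly
      = (Q₁ + d • (1 : Matrix (Fin n) (Fin n) ℝ)).charpoly * (X - C (d - n * t)) := by
  set M : Matrix (Fin n) (Fin n) ℝ := Q₁ + d • 1 with hM
  set a : Fin n → ℝ[X] := fun _ => C t with ha
  set b : Fin n → ℝ[X] := fun _ => 1 with hb
  have hvm : b ᵥ* charmatrix M = (X - C d) • b := by
    funext j
    have h1 : ∑ x, diagonal (fun _ => (X : ℝ[X])) x j = X := by
      simp [diagonal_apply, Finset.sum_ite_eq' Finset.univ j]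
    have h2 : ∑ x, C (M x j) = C d := by
      rw [← map_sum]
      congr 1
      simp only [hM, Matrix.add_apply, Matrix.smul_apply, Matrix.one_apply, smul_eq_mul,
        Finset.sum_add_distrib, hcol j, zero_add, mul_ite, mul_one, mul_zero]
      simp [Finset.sum_ite_eq' Finset.univ j]
    simp only [vecMul, dotProduct, hb, one_mul, Pi.smul_apply, smul_eq_mul, mul_one,
      charmatrix_apply, Finset.sum_sub_distrib, h1, h2]
  have hcr : charmatrix M + replicateCol Unit a * replicateRow Unit b = charmatrix (M - t • allOnes n) := by
    ext i j
    simp only [Matrix.add_apply, charmatrix_apply, Matrix.sub_apply, Matrix.smul_apply,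
      Matrix.mul_apply, Matrix.replicateCol_apply, Matrix.replicateRow_apply, ha, hb, allOnes, Matrix.of_apply,
      mul_one, Finset.sum_const, Finset.card_univ, Fintype.card_unit, one_smul, smul_eq_mul]
    rw [map_sub]
    ring
  have hba : b ⬝ᵥ a = C ((n : ℝ) * t) := by
    simp only [dotProduct, hb, ha, one_mul, Finset.sum_const, Finset.card_univ,
      Fintype.card_fin, nsmul_eq_mul]
    rw [← Polynomial.C_eq_natCast, ← C_mul]
  have := my_det_add_col_mul_row (charmatrix M) a b (X - C d) hvm
  rw [hcr, hba] at this
  rw [Matrix.charpoly, Matrix.charpoly, this]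
  congr 1
  rw [RingHom.map_sub]
  ring

/-- Two identical layers `Q₂ = Q₁` with the (n−1)-to-(n−1) interconnection
`B = p(J − I)`: if `Q₁x = μx` and `uᵀx = 0`, then `(x, −x)` is an eigenvector of the
supra-Laplacian with eigenvalue `μ + (n−2)p`. Moreover, if `Q₁` is positive semidefinite
and `n ≥ 2`, then `λ₂(Q) = min(2(n−1)p, λ₂(Q₁) + (n−2)p)`, so the structural transition
occurs at `p* = λ₂(Q₁)/n`. -/
theorem stmt_13
    (n : ℕ) (p : ℝ) (hp : 0 ≤ p)
    (Q₁ : Matrix (Fin n) (Fin n) ℝ)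
    (hQ₁ : Q₁.IsHermitian) (hQ₁u : Q₁ *ᵥ (fun _ => (1:ℝ)) = 0)
    (Q : Matrix (Fin n ⊕ Fin n) (Fin n ⊕ Fin n) ℝ)
    (hQdef : Q = Matrix.fromBlocks
      (Q₁ + (((n:ℝ) - 1) * p) • 1) (-(p • (allOnes n - 1)))
      (-(p • (allOnes n - 1))) (Q₁ + (((n:ℝ) - 1) * p) • 1))
    (hQH : Q.IsHermitian) :
    (∀ (x : Fin n → ℝ) (μ : ℝ), Q₁ *ᵥ x = μ • x → (fun _ => (1:ℝ)) ⬝ᵥ x = 0 →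
        Q *ᵥ (Sum.elim x (-x)) = (μ + ((n:ℝ) - 2) * p) • (Sum.elim x (-x))) ∧
      (Q₁.PosSemidef → 2 ≤ n →
        (sortedEigs hQH)[1]! =
          min (2 * ((n:ℝ) - 1) * p) ((sortedEigs hQ₁)[1]! + ((n:ℝ) - 2) * p) ∧
        ((sortedEigs hQH)[1]! = 2 * ((n:ℝ) - 1) * p ↔
          p ≤ (sortedEigs hQ₁)[1]! / (n:ℝ))) := by
  constructor
  · -- Part 1
    intro x μ hx hux
    have hJ : (allOnes n) *ᵥ x = 0 := by
      funext i
      simpa [allOnes, mulVec, dotProduct] using hux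
    have hAx : (Q₁ + (((n:ℝ) - 1) * p) • (1 : Matrix (Fin n) (Fin n) ℝ)) *ᵥ x
        = (μ + ((n:ℝ) - 1) * p) • x := by
      rw [add_mulVec, hx, smul_mulVec, one_mulVec, add_smul]
    have hBx : (-(p • (allOnes n - 1))) *ᵥ x = p • x := by
      rw [neg_mulVec, smul_mulVec, sub_mulVec, hJ, one_mulVec, zero_sub, smul_neg, neg_neg]
    rw [hQdef, fromBlocks_mulVec]
    have hl : Sum.elim x (-x) ∘ Sum.inl = x := rfl
    have hr : Sum.elim x (-x) ∘ Sum.inr = -x := rfl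
    rw [hl, hr]
    have hBx' : (-(p • (allOnes n - 1))) *ᵥ (-x) = -(p • x) := by rw [mulVec_neg, hBx]
    have hAx' : (Q₁ + (((n:ℝ) - 1) * p) • (1 : Matrix (Fin n) (Fin n) ℝ)) *ᵥ (-x)
        = -((μ + ((n:ℝ) - 1) * p) • x) := by rw [mulVec_neg, hAx]
    rw [hBx', hAx', hBx, hAx]
    funext i
    cases i <;> simp [Pi.smul_apply] <;> ring
  · -- Part 2
    intro hPSD hn
    classical
    -- abbreviations
    set np : ℝ := (n : ℝ) * p with hnp_def
    set n2p : ℝ := ((n : ℝ) - 2) * p with hn2p_def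
    set c₂ : ℝ := 2 * ((n : ℝ) - 1) * p with hc₂_def
    set E₁ : Multiset ℝ := Finset.univ.val.map hQ₁.eigenvalues with hE₁def
    set F : Multiset ℝ := Finset.univ.val.map hQH.eigenvalues with hFdef
    -- column sums of Q₁ vanish
    have hsym : ∀ i j, Q₁ i j = Q₁ j i := by
      intro i j
      have := congrFun (congrFun hQ₁ i) j
      simpa [Matrix.conjTranspose_apply] using this.symm
    have hrow : ∀ i, ∑ j, Q₁ i j = 0 := by
      intro i
      have := congrFun hQ₁u i
      simpa [Matrix.mulVec, dotProduct] using this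
    have hcol : ∀ j, ∑ i, Q₁ i j = 0 := by
      intro j
      calc ∑ i, Q₁ i j = ∑ i, Q₁ j i := by simp_rw [hsym]
        _ = 0 := hrow j
    -- charpoly of blocks
    set Ap : Matrix (Fin n) (Fin n) ℝ := Q₁ + np • (1 : Matrix (Fin n) (Fin n) ℝ) - p • allOnes n
      with hApdef
    set Am : Matrix (Fin n) (Fin n) ℝ :=
      Q₁ + n2p • (1 : Matrix (Fin n) (Fin n) ℝ) - (-p) • allOnes n with hAmdef
    have hcharQ : Q.charpoly = Ap.charpoly * Am.charpoly := by
      rw [hQdef, my_charpoly_blocks]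
      congr 2
      · rw [hApdef, hnp_def]; module
      · rw [hAmdef, hn2p_def]; module
    have hEq1 : (X - C np) * Ap.charpoly =
        (Q₁ + np • (1 : Matrix (Fin n) (Fin n) ℝ)).charpoly * X := by
      have := my_key_rank_one Q₁ hcol np p
      rw [hApdef]
      rw [this]
      have : np - (n : ℝ) * p = 0 := by rw [hnp_def]; ring
      rw [this, map_zero, sub_zero]
    have hEq2 : (X - C n2p) * Am.charpoly =
        (Q₁ + n2p • (1 : Matrix (Fin n) (Fin n) ℝ)).charpoly * (X - C c₂) := by
      have := my_key_rank_one Q₁ hcol n2p (-p)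
      rw [hAmdef]
      rw [this]
      have : n2p - (n : ℝ) * (-p) = c₂ := by rw [hn2p_def, hc₂_def]; ring
      rw [this]
    -- charpolys as products over eigenvalue multisets
    have hprod : ∀ c : ℝ, (Q₁ + c • (1 : Matrix (Fin n) (Fin n) ℝ)).charpoly =
        ((E₁.map (fun r => r + c)).map (fun r => X - C r)).prod := by
      intro c
      rw [my_charpoly_hermitian_shift hQ₁ c, Finset.prod_eq_multiset_prod, hE₁def,
        Multiset.map_map, Multiset.map_map]
      rfl
    have hQprod : Q.charpoly = (F.map (fun r => X - C r)).prod := by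
      have h0 : Q + (0:ℝ) • (1 : Matrix (Fin n ⊕ Fin n) (Fin n ⊕ Fin n) ℝ) = Q := by
        rw [zero_smul, add_zero]
      have := my_charpoly_hermitian_shift hQH 0
      rw [h0] at this
      rw [this, Finset.prod_eq_multiset_prod, hFdef, Multiset.map_map]
      simp
    -- the big polynomial identity and its roots
    have hBig : (((np ::ₘ n2p ::ₘ F)).map (fun r => X - C r)).prod =
        (((E₁.map (fun r => r + np)) + (E₁.map (fun r => r + n2p)) +
          ((0:ℝ) ::ₘ c₂ ::ₘ 0)).map (fun r => X - C r)).prod := by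
      rw [Multiset.map_cons, Multiset.map_cons, Multiset.prod_cons, Multiset.prod_cons,
        ← hQprod, Multiset.map_add, Multiset.map_add, Multiset.prod_add, Multiset.prod_add,
        ← hprod np, ← hprod n2p, Multiset.map_cons, Multiset.map_cons, Multiset.map_zero,
        Multiset.prod_cons, Multiset.prod_cons, Multiset.prod_zero, hcharQ]
      have hx : X - C (0:ℝ) = X := by rw [map_zero, sub_zero]
      rw [hx]
      calc (X - C np) * ((X - C n2p) * (Ap.charpoly * Am.charpoly))
          = ((X - C np) * Ap.charpoly) * ((X - C n2p) * Am.charpoly) := by ring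
        _ = (Q₁ + np • (1 : Matrix (Fin n) (Fin n) ℝ)).charpoly * X *
            ((Q₁ + n2p • (1 : Matrix (Fin n) (Fin n) ℝ)).charpoly * (X - C c₂)) := by
            rw [hEq1, hEq2]
        _ = _ := by ring
    have hstar : np ::ₘ n2p ::ₘ F =
        (E₁.map (fun r => r + np)) + (E₁.map (fun r => r + n2p)) + ((0:ℝ) ::ₘ c₂ ::ₘ 0) := by
      have := congrArg Polynomial.roots hBig
      rwa [Polynomial.roots_multiset_prod_X_sub_C, Polynomial.roots_multiset_prod_X_sub_C]
        at this
    -- 0 is an eigenvalue of Q₁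
    have hne0 : (fun _ => (1:ℝ)) ≠ (0 : Fin n → ℝ) := by
      intro h
      have := congrFun h ⟨0, by omega⟩
      simp at this
    have hdet : Q₁.det = 0 := by
      rw [← Matrix.exists_mulVec_eq_zero_iff]
      exact ⟨_, hne0, hQ₁u⟩
    have h0E : (0:ℝ) ∈ E₁ := by
      have hpe : ∏ i, hQ₁.eigenvalues i = 0 := by
        have h := hQ₁.det_eq_prod_eigenvalues
        rw [hdet] at h
        exact_mod_cast h.symm
      obtain ⟨i, _, hi⟩ := Finset.prod_eq_zero_iff.mp hpe
      exact Multiset.mem_map.mpr ⟨i, by simp, hi⟩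
    set E' : Multiset ℝ := E₁.erase 0 with hE'def
    have hE₁eq : E₁ = (0:ℝ) ::ₘ E' := (Multiset.cons_erase h0E).symm
    have hE'card : E'.card = n - 1 := by
      have h1 : E₁.card = n := by rw [hE₁def]; simp
      have := congrArg Multiset.card hE₁eq
      rw [h1, Multiset.card_cons] at this
      omega
    have hE'ne : E' ≠ 0 := by
      intro h
      rw [h] at hE'card
      simp at hE'card
      omega
    obtain ⟨b, E'', hE'eq, hminE'⟩ := my_exists_min E' hE'ne
    -- nonnegativity facts
    have hnonneg : ∀ x ∈ E₁, (0:ℝ) ≤ x := by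
      intro x hx
      obtain ⟨i, _, hi⟩ := Multiset.mem_map.mp hx
      exact hi ▸ hPSD.eigenvalues_nonneg i
    have hbE₁ : b ∈ E₁ := by
      rw [hE₁eq]
      exact Multiset.mem_cons_of_mem (hE'eq ▸ Multiset.mem_cons_self b E'')
    have hb0 : (0:ℝ) ≤ b := hnonneg b hbE₁
    have hminE'' : ∀ x ∈ E'', b ≤ x := fun x hx =>
      hminE' x (hE'eq ▸ Multiset.mem_cons_of_mem hx)
    have hnR : (2:ℝ) ≤ (n:ℝ) := by exact_mod_cast hn
    have hc₂0 : 0 ≤ c₂ := by rw [hc₂_def]; nlinarith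
    have hn2p0 : 0 ≤ n2p := by rw [hn2p_def]; nlinarith
    have hnp_ge : n2p ≤ np := by rw [hn2p_def, hnp_def]; nlinarith
    -- second eigenvalue of Q₁
    have hsorted1 : (sortedEigs hQ₁)[1]! = b := by
      apply my_sort_get1 E₁ 0 b hb0 E''
      · rw [hE₁eq, hE'eq]
      · exact hminE''
    -- cancel np and n2p in hstar
    have hFG : F = (E'.map (fun r => r + np)) + (E'.map (fun r => r + n2p)) +
        ((0:ℝ) ::ₘ c₂ ::ₘ 0) := by
      have hR : (E₁.map (fun r => r + np)) + (E₁.map (fun r => r + n2p)) +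
          ((0:ℝ) ::ₘ c₂ ::ₘ 0) = np ::ₘ n2p ::ₘ ((E'.map (fun r => r + np)) +
            (E'.map (fun r => r + n2p)) + ((0:ℝ) ::ₘ c₂ ::ₘ 0)) := by
        rw [hE₁eq, Multiset.map_cons, Multiset.map_cons]
        simp only [zero_add, ← Multiset.singleton_add]
        abel
      rw [hR] at hstar
      exact (Multiset.cons_inj_right _).mp ((Multiset.cons_inj_right _).mp hstar)
    -- elements of the maps are bounded below
    have hmem_ge : ∀ x ∈ (E'.map (fun r => r + np)) + (E'.map (fun r => r + n2p)),
        b + n2p ≤ x := by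
      intro x hx
      rcases Multiset.mem_add.mp hx with h | h
      · obtain ⟨y, hy, rfl⟩ := Multiset.mem_map.mp h
        have := hminE' y hy
        linarith [hnp_ge]
      · obtain ⟨y, hy, rfl⟩ := Multiset.mem_map.mp h
        have := hminE' y hy
        linarith
    -- second eigenvalue of Q
    have hsorted2 : (sortedEigs hQH)[1]! = min c₂ (b + n2p) := by
      rcases le_total c₂ (b + n2p) with h | h
      · rw [min_eq_left h]
        apply my_sort_get1 F 0 c₂ hc₂0 ((E'.map (fun r => r + np)) + (E'.map (fun r => r + n2p)))
        · rw [hFG]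
          simp only [← Multiset.singleton_add]
          abel
        · intro x hx
          exact le_trans h (hmem_ge x hx)
      · rw [min_eq_right h]
        apply my_sort_get1 F 0 (b + n2p) (by linarith)
          ((E'.map (fun r => r + np)) + (E''.map (fun r => r + n2p)) + (c₂ ::ₘ 0))
        · rw [hFG, hE'eq, Multiset.map_cons, Multiset.map_cons]
          simp only [← Multiset.singleton_add]
          abel
        · intro x hx
          rcases Multiset.mem_add.mp hx with h' | h'
          · rcases Multiset.mem_add.mp h' with h'' | h''
            · obtain ⟨y, hy, rfl⟩ := Multiset.mem_map.mp h''
              have := hminE' y hy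
              linarith [hnp_ge]
            · obtain ⟨y, hy, rfl⟩ := Multiset.mem_map.mp h''
              have := hminE'' y hy
              linarith
          · rcases Multiset.mem_cons.mp h' with h'' | h''
            · exact h'' ▸ h
            · simp at h''
    constructor
    · rw [hsorted2, hsorted1]
    · rw [hsorted2, hsorted1]
      have h2n : (0:ℝ) < (n:ℝ) := by linarith
      rw [min_eq_left_iff, le_div_iff₀ h2n]
      constructor <;> intro h <;> [skip; skip] <;> nlinarith [h]
end

section
/- Let Q₁ be a symmetric n×n real matrix with Q₁u = 0, let p ≥ 0, and let Q = [[Q₁ + np·I, −pJ], [−pJ, nI − J − Q₁ + np·I]] be the supra-Laplacian of a graph with Laplacian Q₁ coupled to its complementary graph (whose Laplacian is nI − J − Q₁) via the n-to-n interconnection B = pJ. If x ∈ ℝⁿ satisfies Q₁ x = μ x and uᵀx = 0, then (x, 0) satisfies Q·(x, 0) = (μ + np)·(x, 0), and (0, x) satisfies Q·(0, x) = (n + np − μ)·(0, x). -/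
open Matrix

/-- A graph with Laplacian `Q₁` coupled to its complementary graph (with
Laplacian `nI − J − Q₁`) via the n-to-n interconnection `B = pJ`: if `Q₁x = μx` and
`uᵀx = 0`, then `(x, 0)` is an eigenvector of the supra-Laplacian with eigenvalue `μ + np`
and `(0, x)` is an eigenvector with eigenvalue `n + np − μ`. -/
theorem stmt_14
    (n : ℕ) (p : ℝ) (hp : 0 ≤ p)
    (Q₁ : Matrix (Fin n) (Fin n) ℝ)
    (hQ₁ : Q₁.IsHermitian) (hQ₁u : Q₁ *ᵥ (fun _ => (1:ℝ)) = 0)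
    (Q : Matrix (Fin n ⊕ Fin n) (Fin n ⊕ Fin n) ℝ)
    (hQdef : Q = Matrix.fromBlocks
      (Q₁ + ((n:ℝ) * p) • 1) (-(p • allOnes n))
      (-(p • allOnes n)) ((n:ℝ) • 1 - allOnes n - Q₁ + ((n:ℝ) * p) • 1))
    (x : Fin n → ℝ) (μ : ℝ)
    (hx : Q₁ *ᵥ x = μ • x) (hxu : (fun _ => (1:ℝ)) ⬝ᵥ x = 0) :
    Q *ᵥ (Sum.elim x (0 : Fin n → ℝ)) = (μ + (n:ℝ) * p) • (Sum.elim x (0 : Fin n → ℝ)) ∧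
      Q *ᵥ (Sum.elim (0 : Fin n → ℝ) x) =
        ((n:ℝ) + (n:ℝ) * p - μ) • (Sum.elim (0 : Fin n → ℝ) x) := by
  have hJx : allOnes n *ᵥ x = 0 := by
    funext i
    simpa [allOnes, Matrix.mulVec, dotProduct] using hxu
  subst hQdef
  constructor
  · funext i
    cases i with
    | inl i =>
      simp [Matrix.fromBlocks_mulVec, hx, hJx, Matrix.add_mulVec, Matrix.smul_mulVec,
        Matrix.neg_mulVec, add_smul]
      ring
    | inr i =>
      simp [Matrix.fromBlocks_mulVec, hx, hJx, Matrix.add_mulVec, Matrix.smul_mulVec,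
        Matrix.neg_mulVec]
  · funext i
    cases i with
    | inl i =>
      simp [Matrix.fromBlocks_mulVec, hx, hJx, Matrix.add_mulVec, Matrix.smul_mulVec,
        Matrix.neg_mulVec]
    | inr i =>
      simp [Matrix.fromBlocks_mulVec, hx, hJx, Matrix.add_mulVec, Matrix.sub_mulVec,
        Matrix.smul_mulVec, Matrix.neg_mulVec]
      ring
end
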